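/- arXiv:1506.07512 — 8 statements merged into one kernel-verified Lean document; each statement's English description precedes it below -/
import Mathlib

section
/- Let F : ℝ^d → ℝ be μ-strongly convex (μ > 0) and attain its minimum value F* = min_x F(x). Then for every s ∈ ℝ^d and every λ ≥ 0, the function f_{s,λ}(x) := F(x) + (λ/2)‖x − s‖₂² attains a minimum value f*_{s,λ}, and f*_{s,λ} − F* ≤ (λ/(μ + λ)) · (F(s) − F*). -/
/-!
A `μ`-strongly convex `F` grows quadratically away from its minimiser `x₀`, so
`f = F + (λ/2)‖· - s‖²` is coercive and attains its minimum. Evaluating `f` at the point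
`y = (μ • x₀ + λ • s) / (μ + λ)` of the segment `[x₀, s]`, the strong-convexity defect
`t (1 - t) (μ/2) ‖x₀ - s‖²` exactly cancels the proximal term `(λ/2) (1 - t)² ‖x₀ - s‖²`
(with `t = λ / (μ + λ)`), leaving `f y ≤ (1 - t) F* + t F s`.
-/

open Set Filter

variable {E : Type*} [NormedAddCommGroup E] [InnerProductSpace ℝ E] {F : E → ℝ} {μ : ℝ}

namespace StrongConvexOn

lemma continuous [FiniteDimensional ℝ E] (hF : StrongConvexOn univ μ F) : Continuous F := by
  have hconv : Continuous fun x => F x - μ / 2 * ‖x‖ ^ 2 :=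
    (strongConvexOn_iff_convex.mp hF).locallyLipschitz.continuous
  exact (hconv.add (by fun_prop : Continuous fun x : E => μ / 2 * ‖x‖ ^ 2)).congr
    fun x => sub_add_cancel (F x) _

lemma add_sq_norm_sub_le_of_isMinOn (hF : StrongConvexOn univ μ F) {x₀ : E}
    (hx₀ : IsMinOn F univ x₀) (x : E) : F x₀ + μ / 4 * ‖x - x₀‖ ^ 2 ≤ F x := by
  have hmid := hF.2 (mem_univ x₀) (mem_univ x) (by norm_num : (0 : ℝ) ≤ 1 / 2)
    (by norm_num : (0 : ℝ) ≤ 1 / 2) (by norm_num)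
  have hle : F x₀ ≤ F ((1 / 2 : ℝ) • x₀ + (1 / 2 : ℝ) • x) := hx₀ (mem_univ _)
  rw [norm_sub_rev] at hmid
  simp only [smul_eq_mul] at hmid
  linarith

lemma exists_forall_add_le [FiniteDimensional ℝ E] (hF : StrongConvexOn univ μ F) (hμ : 0 < μ)
    {x₀ : E} (hx₀ : IsMinOn F univ x₀) {g : E → ℝ} (hg : Continuous g)
    (hg_bdd : BddBelow (range g)) : ∃ x, ∀ y, F x + g x ≤ F y + g y := by
  obtain ⟨b, hb⟩ := hg_bdd
  have hgrowth : Tendsto (fun x => F x₀ + b + μ / 4 * dist x x₀ ^ 2) (cocompact E) atTop :=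
    tendsto_atTop_add_const_left _ _ <| Tendsto.const_mul_atTop (by positivity) <|
      (tendsto_pow_atTop two_ne_zero).comp (tendsto_dist_right_cocompact_atTop x₀)
  refine (hF.continuous.add hg).exists_forall_le (tendsto_atTop_mono (fun x => ?_) hgrowth)
  have := hF.add_sq_norm_sub_le_of_isMinOn hx₀ x
  have := hb ⟨x, rfl⟩
  rw [dist_eq_norm]
  simp only [Pi.add_apply]
  linarith

lemma exists_add_sq_norm_sub_le (hF : StrongConvexOn univ μ F) (hμ : 0 ≤ μ) {lam : ℝ}
    (hlam : 0 ≤ lam) (hpos : 0 < μ + lam) (x s : E) :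
    ∃ y, F y + lam / 2 * ‖y - s‖ ^ 2 ≤ μ / (μ + lam) * F x + lam / (μ + lam) * F s := by
  set a := μ / (μ + lam)
  set b := lam / (μ + lam)
  have hab : a + b = 1 := by rw [← add_div, div_self hpos.ne']
  have hdefect : lam * a = μ * b := by simp only [a, b]; ring
  refine ⟨a • x + b • s, ?_⟩
  have hF_le := hF.2 (mem_univ x) (mem_univ s) (by positivity) (by positivity) hab
  have hdist : ‖a • x + b • s - s‖ ^ 2 = a ^ 2 * ‖x - s‖ ^ 2 := by
    have hys : a • x + b • s - s = a • (x - s) := by rw [eq_sub_of_add_eq' hab]; module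
    rw [hys, norm_smul, mul_pow, Real.norm_eq_abs, sq_abs]
  rw [hdist]
  simp only [smul_eq_mul] at hF_le
  linear_combination hF_le + (a / 2 * ‖x - s‖ ^ 2) * hdefect

end StrongConvexOn

/-- Lemma: Relationship between minima.
If `F : ℝ^d → ℝ` is `μ`-strongly convex (`μ > 0`) attaining minimum value `Fstar`,
then for every `s` and `λ ≥ 0` the function `f_{s,λ}(x) = F x + (λ/2)‖x - s‖²`
attains a minimum value `fstar` with `fstar - Fstar ≤ (λ/(μ+λ)) (F s - Fstar)`. -/
theorem stmt0 {d : ℕ} (F : EuclideanSpace ℝ (Fin d) → ℝ) (μ : ℝ) (hμ : 0 < μ)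
    (hsc : ConvexOn ℝ Set.univ (fun x => F x - μ / 2 * ‖x‖ ^ 2))
    (Fstar : ℝ) (hF : IsLeast (Set.range F) Fstar)
    (s : EuclideanSpace ℝ (Fin d)) (lam : ℝ) (hlam : 0 ≤ lam) :
    ∃ fstar : ℝ,
      IsLeast (Set.range (fun x => F x + lam / 2 * ‖x - s‖ ^ 2)) fstar ∧
      fstar - Fstar ≤ lam / (μ + lam) * (F s - Fstar) := by
  have hstrong : StrongConvexOn univ μ F := strongConvexOn_iff_convex.mpr hsc
  obtain ⟨⟨x₀, rfl⟩, hx₀⟩ := hF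
  obtain ⟨xmin, hxmin⟩ := hstrong.exists_forall_add_le hμ (fun x _ => hx₀ ⟨x, rfl⟩)
    (g := fun x => lam / 2 * ‖x - s‖ ^ 2) (by fun_prop)
    ⟨0, by rintro _ ⟨x, rfl⟩; positivity⟩
  obtain ⟨y, hy⟩ := hstrong.exists_add_sq_norm_sub_le hμ.le hlam (by linarith) x₀ s
  refine ⟨F xmin + lam / 2 * ‖xmin - s‖ ^ 2, ⟨⟨xmin, rfl⟩, ?_⟩, ?_⟩
  · rintro _ ⟨x, rfl⟩
    exact hxmin x
  · have hweights : μ / (μ + lam) = 1 - lam / (μ + lam) := by field_simp; ring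
    rw [hweights] at hy
    linarith [hxmin y]
end

section
/- Let F : ℝ^d → ℝ be μ-strongly convex (μ > 0) attaining minimum value F*, let λ > 0, c' ∈ (0,1), and x ∈ ℝ^d, and let f*_{x,λ} denote the minimum value of f_{x,λ}. If x' ∈ ℝ^d satisfies f_{x,λ}(x') − f*_{x,λ} ≤ (c'·μ/(λ + μ)) · (f_{x,λ}(x) − f*_{x,λ}), then F(x') − F* ≤ ((λ + c'·μ)/(λ + μ)) · (F(x) − F*). -/
/-!
Let `x⋆` minimise `F`, and test the proximal objective `f z = F z + λ/2 ‖z - x‖²` at the point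
`p = (λ x + μ x⋆)/(λ + μ)`. Strong convexity of `F` along the segment `[x, x⋆]` gains exactly as
much as the proximal term loses there, so `(λ + μ) f⋆ ≤ λ F x + μ F⋆`. Since `F ≤ f`, `F x = f x`
and `F⋆ ≤ f⋆`, the assumed accuracy of `x'` turns this into the contraction.
-/

open Set

theorem StrongConvexOn.exists_mul_add_sq_norm_sub_le {E : Type*} [NormedAddCommGroup E]
    [InnerProductSpace ℝ E] {s : Set E} {F : E → ℝ} {μ lam : ℝ} (hF : StrongConvexOn s μ F)
    (hμ : 0 < μ) (hlam : 0 ≤ lam) {x y : E} (hx : x ∈ s) (hy : y ∈ s) :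
    ∃ p ∈ s, (lam + μ) * (F p + lam / 2 * ‖p - x‖ ^ 2) ≤ lam * F x + μ * F y := by
  have hsum : 0 < lam + μ := by positivity
  set a := lam / (lam + μ)
  set b := μ / (lam + μ)
  have hab : a + b = 1 := by rw [← add_div, div_self hsum.ne']
  have hconv := hF.2 hx hy (by positivity) (by positivity) hab
  simp only [smul_eq_mul] at hconv
  have hdist : a • x + b • y - x = b • (y - x) := by
    calc a • x + b • y - x = a • x + b • y - (a + b) • x := by rw [hab, one_smul]
      _ = b • (y - x) := by module
  refine ⟨a • x + b • y, hF.1 hx hy (by positivity) (by positivity) hab, ?_⟩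
  rw [hdist, norm_smul, Real.norm_of_nonneg (by positivity), norm_sub_rev]
  have hcancel : lam / 2 * (b * ‖x - y‖) ^ 2 = a * b * (μ / 2 * ‖x - y‖ ^ 2) := by
    simp only [a, b]; field_simp
  have hweights : (lam + μ) * (a * F x + b * F y) = lam * F x + μ * F y := by
    simp only [a, b]; field_simp
  linear_combination (lam + μ) * hconv + (lam + μ) * hcancel + hweights

/-- Contraction in APPA, one step, deterministic oracle. -/
theorem stmt1 {d : ℕ} (F : EuclideanSpace ℝ (Fin d) → ℝ) (μ : ℝ) (hμ : 0 < μ)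
    (hsc : ConvexOn ℝ Set.univ (fun z => F z - μ / 2 * ‖z‖ ^ 2))
    (Fstar : ℝ) (hF : IsLeast (Set.range F) Fstar)
    (lam : ℝ) (hlam : 0 < lam) (c' : ℝ) (hc' : c' ∈ Set.Ioo (0 : ℝ) 1)
    (x : EuclideanSpace ℝ (Fin d))
    (fstar : ℝ)
    (hfstar : IsLeast (Set.range (fun z => F z + lam / 2 * ‖z - x‖ ^ 2)) fstar)
    (x' : EuclideanSpace ℝ (Fin d))
    (hx' : (F x' + lam / 2 * ‖x' - x‖ ^ 2) - fstar ≤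
      c' * μ / (lam + μ) * ((F x + lam / 2 * ‖x - x‖ ^ 2) - fstar)) :
    F x' - Fstar ≤ (lam + c' * μ) / (lam + μ) * (F x - Fstar) := by
  have hsum : 0 < lam + μ := by positivity
  obtain ⟨xs, rfl⟩ := hF.1
  obtain ⟨p, -, hp⟩ := (strongConvexOn_iff_convex.mpr hsc).exists_mul_add_sq_norm_sub_le hμ
    hlam.le (mem_univ x) (mem_univ xs)
  have hprox : (lam + μ) * fstar ≤ lam * F x + μ * F xs :=
    (mul_le_mul_of_nonneg_left (hfstar.2 ⟨p, rfl⟩) hsum.le).trans hp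
  have hmin : F xs ≤ fstar := by
    obtain ⟨z, rfl⟩ := hfstar.1
    exact (hF.2 ⟨z, rfl⟩).trans (le_add_of_nonneg_right (by positivity))
  have hacc : F x' - fstar ≤ c' * μ / (lam + μ) * (F x - fstar) := by
    have : 0 ≤ lam / 2 * ‖x' - x‖ ^ 2 := by positivity
    rw [sub_self, norm_zero, zero_pow two_ne_zero, mul_zero, add_zero] at hx'
    linarith
  have hacc' : (lam + μ) * (F x' - fstar) ≤ c' * μ * (F x - fstar) := by
    calc (lam + μ) * (F x' - fstar) ≤ (lam + μ) * (c' * μ / (lam + μ) * (F x - fstar)) := by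
          gcongr
      _ = c' * μ * (F x - fstar) := by field_simp
  rw [div_mul_eq_mul_div, le_div_iff₀ hsum]
  linarith [mul_nonneg (mul_nonneg hc'.1.le hμ.le) (sub_nonneg.mpr hmin)]
end

section
/- Let F : ℝ^d → ℝ be μ-strongly convex (μ > 0) attaining minimum value F*, and let λ > 0. Suppose a sequence x^(0), x^(1), …, x^(T) in ℝ^d satisfies, for each t = 1, …, T, the approximate proximal condition f_{x^(t−1),λ}(x^(t)) − f*_{x^(t−1),λ} ≤ (μ/(2(λ + μ))) · (f_{x^(t−1),λ}(x^(t−1)) − f*_{x^(t−1),λ}), where f*_{s,λ} denotes the minimum value of f_{s,λ}. Then F(x^(T)) − F* ≤ ((λ + μ/2)/(λ + μ))^T · (F(x^(0)) − F*). -/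
/-!
Evaluating the proximal objective `f_{s,λ}` at the point `θ • w + (1 - θ) • s`, with
`θ = μ / (λ + μ)`, the quadratic penalty `λ/2 θ² ‖w - s‖²` is exactly cancelled by the
strong-convexity gain `μ/2 θ (1 - θ) ‖w - s‖²`, so `f*_{s,λ} - F w ≤ (1 - θ) (F s - F w)` for
every `w`. An oracle step loses at most a further `μ / (2 (λ + μ))` fraction of `F s - F*`, so
each step contracts the optimality gap by `1 - θ + μ / (2 (λ + μ)) = (λ + μ/2) / (λ + μ)`.
-/

open Set

variable {E : Type*} [NormedAddCommGroup E] [NormedSpace ℝ E]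

lemma StrongConvexOn.proxValue_sub_le {f : E → ℝ} {m lam : ℝ} (hf : StrongConvexOn univ m f)
    (hm : 0 ≤ m) (hlam : 0 < lam) {s : E} {fs : ℝ}
    (hprox : ∀ z, fs ≤ f z + lam / 2 * ‖z - s‖ ^ 2) (w : E) :
    fs - f w ≤ lam / (lam + m) * (f s - f w) := by
  have hlm : 0 < lam + m := by linarith
  set θ := m / (lam + m)
  have hθ : 1 - θ = lam / (lam + m) := by simp only [θ]; field_simp; ring
  have hpenalty_eq_gain : lam / 2 * θ ^ 2 = θ * (1 - θ) * (m / 2) := by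
    simp only [θ]; field_simp; ring
  have hconv : f (θ • w + (1 - θ) • s) ≤ θ * f w + (1 - θ) * f s
      - θ * (1 - θ) * (m / 2 * ‖w - s‖ ^ 2) :=
    hf.2 (mem_univ w) (mem_univ s) (by positivity) (by rw [hθ]; positivity) (by ring)
  have hdist : ‖(θ • w + (1 - θ) • s) - s‖ ^ 2 = θ ^ 2 * ‖w - s‖ ^ 2 := by
    rw [show (θ • w + (1 - θ) • s) - s = θ • (w - s) by module, norm_smul, mul_pow,
      Real.norm_eq_abs, sq_abs]
  have hval := hprox (θ • w + (1 - θ) • s)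
  rw [hdist] at hval
  rw [← hθ]
  linear_combination hval + hconv + ‖w - s‖ ^ 2 * hpenalty_eq_gain

lemma StrongConvexOn.proxStep_gap_le {f : E → ℝ} {m lam fmin fs : ℝ}
    (hf : StrongConvexOn univ m f) (hm : 0 ≤ m) (hlam : 0 < lam)
    (hfmin : IsLeast (range f) fmin) {s x : E}
    (hfs : IsLeast (range fun z => f z + lam / 2 * ‖z - s‖ ^ 2) fs)
    (hx : f x + lam / 2 * ‖x - s‖ ^ 2 - fs ≤ m / (2 * (lam + m)) * (f s - fs)) :
    f x - fmin ≤ (lam + m / 2) / (lam + m) * (f s - fmin) := by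
  obtain ⟨w, hw⟩ := hfmin.1
  have hprox : fs - fmin ≤ lam / (lam + m) * (f s - fmin) :=
    hw ▸ hf.proxValue_sub_le hm hlam (fun z => hfs.2 ⟨z, rfl⟩) w
  have hfs_ge : fmin ≤ fs := by
    obtain ⟨z, rfl⟩ := hfs.1
    have hpenalty : 0 ≤ lam / 2 * ‖z - s‖ ^ 2 := by positivity
    linarith [hfmin.2 ⟨z, rfl⟩]
  have hr : 0 ≤ m / (2 * (lam + m)) := by positivity
  have hcoeff : (lam + m / 2) / (lam + m) = lam / (lam + m) + m / (2 * (lam + m)) := by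
    field_simp
  rw [hcoeff]
  have hpenalty : 0 ≤ lam / 2 * ‖x - s‖ ^ 2 := by positivity
  linarith [mul_le_mul_of_nonneg_left hfs_ge hr]

/-- Geometric convergence of APPA with a
`(2(λ+μ)/μ, λ)`-primal oracle. -/
theorem stmt2 {d : ℕ} (F : EuclideanSpace ℝ (Fin d) → ℝ) (μ : ℝ) (hμ : 0 < μ)
    (hsc : ConvexOn ℝ Set.univ (fun z => F z - μ / 2 * ‖z‖ ^ 2))
    (Fstar : ℝ) (hF : IsLeast (Set.range F) Fstar)
    (lam : ℝ) (hlam : 0 < lam)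
    (T : ℕ) (x : ℕ → EuclideanSpace ℝ (Fin d))
    (fstar : EuclideanSpace ℝ (Fin d) → ℝ)
    (hfstar : ∀ s, IsLeast (Set.range (fun z => F z + lam / 2 * ‖z - s‖ ^ 2)) (fstar s))
    (hstep : ∀ t, 1 ≤ t → t ≤ T →
      (F (x t) + lam / 2 * ‖x t - x (t - 1)‖ ^ 2) - fstar (x (t - 1)) ≤
        μ / (2 * (lam + μ)) *
          ((F (x (t - 1)) + lam / 2 * ‖x (t - 1) - x (t - 1)‖ ^ 2) - fstar (x (t - 1)))) :
    F (x T) - Fstar ≤ ((lam + μ / 2) / (lam + μ)) ^ T * (F (x 0) - Fstar) := by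
  have hF_sc : StrongConvexOn univ μ F := strongConvexOn_iff_convex.2 hsc
  refine le_geom (u := fun t => F (x t) - Fstar) (by positivity) T fun k hk => ?_
  have horacle := hstep (k + 1) (by omega) (by omega)
  simp only [Nat.add_sub_cancel, sub_self, norm_zero] at horacle
  exact hF_sc.proxStep_gap_le hμ.le hlam hF (hfstar _) (by simpa using horacle)
end

section
/- Let F : ℝ^d → ℝ be μ-strongly convex (μ > 0), let λ > 0, x₀ ∈ ℝ^d, ε > 0, and suppose x⁺ ∈ ℝ^d satisfies f_{x₀,λ}(x⁺) − f*_{x₀,λ} ≤ ε, where f*_{x₀,λ} is the minimum value of f_{x₀,λ}. Set μ' := μ/2 and g := λ(x₀ − x⁺). Then for all x ∈ ℝ^d: F(x) ≥ F(x⁺) − (1/(2μ'))‖g‖₂² + (μ'/2)‖x − (x₀ − (1/μ' + 1/λ)g)‖₂² − ((λ + 2μ')/μ')·ε. -/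
/-!
The proximal objective `f = F + λ/2 ‖· - x₀‖²` is `(μ + λ)`-strongly convex, so it grows
quadratically away from its exact minimiser `x*`: `f y ≥ f* + (μ + λ)/2 ‖y - x*‖²`.
At `y = x⁺` this forces `(μ + λ)/2 ‖x⁺ - x*‖² ≤ ε`; at a general `y = x` it is a quadratic minorant
of `F` of curvature `μ` centred at an expression in `x*`. Recentring it at the computable point `x⁺`
costs half of the curvature and a multiple of `ε`, by a single sum-of-squares identity.
-/

open Set Filter Topology

variable {E : Type*} [NormedAddCommGroup E] [InnerProductSpace ℝ E]

lemma strongConvexOn_sq_norm_sub {s : Set E} (hs : Convex ℝ s) (m : ℝ) (c : E) :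
    StrongConvexOn s m fun z ↦ m / 2 * ‖z - c‖ ^ 2 := by
  refine strongConvexOn_iff_convex.2 ⟨hs, fun x _ y _ a b _ _ hab ↦ le_of_eq ?_⟩
  obtain rfl := eq_sub_of_add_eq hab
  simp only [norm_sub_sq_real, norm_add_sq_real, norm_smul, inner_add_left, real_inner_smul_left,
    smul_eq_mul]
  ring

lemma StrongConvexOn.add {s : Set E} {m n : ℝ} {f g : E → ℝ} (hf : StrongConvexOn s m f)
    (hg : StrongConvexOn s n g) : StrongConvexOn s (m + n) (f + g) := by
  have hφ : (fun r : ℝ ↦ (m + n) / 2 * r ^ 2) = (fun r ↦ m / 2 * r ^ 2) + fun r ↦ n / 2 * r ^ 2 := by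
    funext r
    simp only [Pi.add_apply]
    ring
  unfold StrongConvexOn
  rw [hφ]
  exact UniformConvexOn.add hf hg

lemma StrongConvexOn.add_sq_norm_sub_le_of_isMinOn_s3 {s : Set E} {m : ℝ} {f : E → ℝ}
    (hf : StrongConvexOn s m f) {x y : E} (hx : x ∈ s) (hmin : IsMinOn f s x) (hy : y ∈ s) :
    f x + m / 2 * ‖y - x‖ ^ 2 ≤ f y := by
  set K := m / 2 * ‖y - x‖ ^ 2
  have hstep : ∀ t ∈ Ioo (0 : ℝ) 1, f x + (1 - t) * K ≤ f y := by
    rintro t ⟨ht0, ht1⟩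
    have hconv : f (t • y + (1 - t) • x) ≤ t * f y + (1 - t) * f x - t * (1 - t) * K :=
      hf.2 hy hx ht0.le (sub_nonneg.2 ht1.le) (add_sub_cancel t 1)
    have hle : f x ≤ f (t • y + (1 - t) • x) :=
      hmin (hf.1 hy hx ht0.le (sub_nonneg.2 ht1.le) (add_sub_cancel t 1))
    have : t * (f x + (1 - t) * K) ≤ t * f y := by linarith
    exact le_of_mul_le_mul_left this ht0
  have hlim : Tendsto (fun t : ℝ ↦ f x + (1 - t) * K) (𝓝[>] 0) (𝓝 (f x + K)) := by
    have : Continuous fun t : ℝ ↦ f x + (1 - t) * K := by fun_prop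
    simpa using (this.tendsto 0).mono_left nhdsWithin_le_nhds
  exact le_of_tendsto hlim (eventually_of_mem (Ioo_mem_nhdsGT one_pos) hstep)

-- Applied with `a, p, s = x - x₀, x⁺ - x₀, x* - x₀`.
lemma prox_recentre_sq_norm_le {m : ℝ} (hm : 0 < m) (lam : ℝ) (a p s : E) :
    m / 2 * ‖a - ((m + lam) / m) • p‖ ^ 2 - lam ^ 2 / (2 * m) * ‖p‖ ^ 2
      ≤ (2 * m + lam) / 2 * ‖a - s‖ ^ 2 - lam / 2 * ‖a‖ ^ 2 + lam / 2 * ‖p‖ ^ 2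
        + (m + lam) * (2 * m + lam) / (2 * m) * ‖p - s‖ ^ 2 := by
  have hsos : 0 ≤ 1 / (2 * m) * ‖m • a + (m + lam) • p - (2 * m + lam) • s‖ ^ 2 := by positivity
  simp only [← real_inner_self_eq_norm_sq, inner_add_left, inner_add_right, inner_sub_left,
    inner_sub_right, real_inner_smul_left, real_inner_smul_right] at hsos ⊢
  rw [real_inner_comm a p, real_inner_comm a s, real_inner_comm p s] at *
  field_simp at hsos ⊢
  nlinarith

theorem quadratic_lower_bound_of_inexact_prox {F : E → ℝ} {m lam ε fstar : ℝ} (hm : 0 < m)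
    (hlam : 0 < lam) {x₀ xs xp : E}
    (hgrow : ∀ y, fstar + (2 * m + lam) / 2 * ‖y - xs‖ ^ 2 ≤ F y + lam / 2 * ‖y - x₀‖ ^ 2)
    (hxp : F xp + lam / 2 * ‖xp - x₀‖ ^ 2 - fstar ≤ ε) (x : E) :
    F x ≥ F xp - 1 / (2 * m) * ‖lam • (x₀ - xp)‖ ^ 2
      + m / 2 * ‖x - (x₀ - (1 / m + 1 / lam) • lam • (x₀ - xp))‖ ^ 2
      - (lam + 2 * m) / m * ε := by
  have hcenter : x - (x₀ - (1 / m + 1 / lam) • lam • (x₀ - xp))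
      = (x - x₀) - ((m + lam) / m) • (xp - x₀) := by
    match_scalars <;> field_simp <;> ring
  have hg : ‖lam • (x₀ - xp)‖ ^ 2 = lam ^ 2 * ‖xp - x₀‖ ^ 2 := by
    rw [norm_smul, norm_sub_rev, mul_pow, Real.norm_eq_abs, sq_abs]
  have hbound := prox_recentre_sq_norm_le hm lam (x - x₀) (xp - x₀) (xs - x₀)
  simp only [sub_sub_sub_cancel_right] at hbound
  have hclose : (2 * m + lam) / 2 * ‖xp - xs‖ ^ 2 ≤ ε := by linarith [hgrow xp]
  have hsplit : (lam + 2 * m) / m * ε = ε + (m + lam) / m * ε := by field_simp; ring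
  rw [hcenter, hg, hsplit]
  linear_combination hgrow x + hxp + hbound
    + mul_le_mul_of_nonneg_left hclose (by positivity : 0 ≤ (m + lam) / m)

theorem stmt3_general {d : ℕ} (F : EuclideanSpace ℝ (Fin d) → ℝ) (μ : ℝ) (hμ : 0 < μ)
    (hsc : ConvexOn ℝ Set.univ (fun z => F z - μ / 2 * ‖z‖ ^ 2))
    (lam : ℝ) (hlam : 0 < lam)
    (x₀ : EuclideanSpace ℝ (Fin d)) (ε : ℝ)
    (fstar : ℝ)
    (hfstar : IsLeast (Set.range (fun z => F z + lam / 2 * ‖z - x₀‖ ^ 2)) fstar)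
    (xp : EuclideanSpace ℝ (Fin d))
    (hxp : (F xp + lam / 2 * ‖xp - x₀‖ ^ 2) - fstar ≤ ε)
    (μ' : ℝ) (hμ' : μ' = μ / 2)
    (g : EuclideanSpace ℝ (Fin d)) (hg : g = lam • (x₀ - xp)) :
    ∀ x : EuclideanSpace ℝ (Fin d),
      F x ≥ F xp - 1 / (2 * μ') * ‖g‖ ^ 2
        + μ' / 2 * ‖x - (x₀ - (1 / μ' + 1 / lam) • g)‖ ^ 2
        - (lam + 2 * μ') / μ' * ε := by
  subst hg
  obtain ⟨⟨xs, rfl⟩, hmin⟩ := hfstar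
  have hprox : StrongConvexOn univ (μ + lam) fun z ↦ F z + lam / 2 * ‖z - x₀‖ ^ 2 :=
    (strongConvexOn_iff_convex.2 hsc).add (strongConvexOn_sq_norm_sub convex_univ lam x₀)
  have hmod : 2 * μ' + lam = μ + lam := by rw [hμ']; ring
  refine quadratic_lower_bound_of_inexact_prox (xs := xs) (by linarith) hlam (fun y ↦ ?_) hxp
  rw [hmod]
  exact hprox.add_sq_norm_sub_le_of_isMinOn_s3 (mem_univ xs) (fun z _ ↦ hmin ⟨z, rfl⟩) (mem_univ y)

/-- Lemma 4.1: quadratic lower bound from an approximate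
proximal step. -/
theorem stmt3 {d : ℕ} (F : EuclideanSpace ℝ (Fin d) → ℝ) (μ : ℝ) (hμ : 0 < μ)
    (hsc : ConvexOn ℝ Set.univ (fun z => F z - μ / 2 * ‖z‖ ^ 2))
    (lam : ℝ) (hlam : 0 < lam)
    (x₀ : EuclideanSpace ℝ (Fin d)) (ε : ℝ) (hε : 0 < ε)
    (fstar : ℝ)
    (hfstar : IsLeast (Set.range (fun z => F z + lam / 2 * ‖z - x₀‖ ^ 2)) fstar)
    (xp : EuclideanSpace ℝ (Fin d))
    (hxp : (F xp + lam / 2 * ‖xp - x₀‖ ^ 2) - fstar ≤ ε)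
    (μ' : ℝ) (hμ' : μ' = μ / 2)
    (g : EuclideanSpace ℝ (Fin d)) (hg : g = lam • (x₀ - xp)) :
    ∀ x : EuclideanSpace ℝ (Fin d),
      F x ≥ F xp - 1 / (2 * μ') * ‖g‖ ^ 2
        + μ' / 2 * ‖x - (x₀ - (1 / μ' + 1 / lam) • g)‖ ^ 2
        - (lam + 2 * μ') / μ' * ε :=
  stmt3_general F μ hμ hsc lam hlam x₀ ε fstar hfstar xp hxp μ' hμ' g hg
end

section
/- Let F : ℝ^d → ℝ be μ-strongly convex (μ > 0), set μ' := μ/2, and let λ ≥ 3μ' and ρ := (μ' + λ)/μ'. Suppose v, x ∈ ℝ^d and ψ* ∈ ℝ satisfy F(z) ≥ ψ* + (μ'/2)‖z − v‖₂² for all z ∈ ℝ^d. Define y := (1/(1 + ρ^{−1/2}))·x + (ρ^{−1/2}/(1 + ρ^{−1/2}))·v, and suppose x⁺ ∈ ℝ^d satisfies f_{y,λ}(x⁺) − f*_{y,λ} ≤ (ρ^{−3/2}/4)·(F(x) − ψ*). Define g := λ(y − x⁺) and v⁺ := (1 − ρ^{−1/2})·v + ρ^{−1/2}·(y − (1/μ'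 + 1/λ)g). Then there exists ψ*⁺ ∈ ℝ such that F(z) ≥ ψ*⁺ + (μ'/2)‖z − v⁺‖₂² for all z ∈ ℝ^d, and F(x⁺) − ψ*⁺ ≤ (1 − ρ^{−1/2}/2)·(F(x) − ψ*). -/
/-!
The prox objective `f = F + λ/2 ‖· - y‖²` is `(2μ' + λ)`-strongly convex, so by Young's inequality
an `ε`-approximate minimizer `x⁺` still gives `f ≥ f* - ρ ε + (μ' + λ)/2 ‖· - x⁺‖²`. Completing the
square turns this into `F ≥ F x⁺ - (1 + ρ) ε - ‖g‖²/(2μ') + μ'/2 ‖· - w‖²` with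
`w = y - (1/μ' + 1/λ) g`, and the new lower bound is the `θ = ρ^(-1/2)` convex combination of the
old one and this one, centred at `v⁺ = (1 - θ) v + θ w`. Evaluating the second bound at `x` and
using that `y` is the `(1, θ)`-barycentre of `x` and `v`, the `‖g‖²` terms are absorbed and the gap
contracts to `(1 - θ)(F x - ψ*) + (1 + ρ) ε ≤ (1 - θ/2)(F x - ψ*)`.
-/

open Set Filter Topology
open scoped RealInnerProductSpace

section
variable {E : Type*} [NormedAddCommGroup E] [InnerProductSpace ℝ E]

lemma norm_smul_add_smul_sq {a b : ℝ} (hab : a + b = 1) (x y : E) :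
    ‖a • x + b • y‖ ^ 2 = a * ‖x‖ ^ 2 + b * ‖y‖ ^ 2 - a * b * ‖x - y‖ ^ 2 := by
  rw [norm_add_sq_real, norm_sub_sq_real, norm_smul, norm_smul, real_inner_smul_left,
    real_inner_smul_right, Real.norm_eq_abs, Real.norm_eq_abs, mul_pow, mul_pow, sq_abs, sq_abs]
  obtain rfl := eq_sub_of_add_eq hab
  ring

lemma norm_add_smul_sq_le {θ : ℝ} (hθ : 0 ≤ θ) (p q : E) :
    ‖p + θ • q‖ ^ 2 ≤ (1 + θ) * (‖p‖ ^ 2 + θ * ‖q‖ ^ 2) := by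
  have hpq : 0 ≤ θ * ‖p - q‖ ^ 2 := by positivity
  rw [norm_add_sq_real, real_inner_smul_right, norm_smul, Real.norm_of_nonneg hθ]
  rw [norm_sub_sq_real] at hpq
  nlinarith

lemma mul_norm_add_sq_le {κ κ' : ℝ} (hκ' : 0 ≤ κ') (hκ : κ' < κ) (a b : E) :
    κ' * ‖a + b‖ ^ 2 ≤ κ * ‖a‖ ^ 2 + κ' / (κ - κ') * κ * ‖b‖ ^ 2 := by
  have hd : 0 < κ - κ' := sub_pos.2 hκ
  have hcs : 0 ≤ ‖a‖ * ‖b‖ - ⟪a, b⟫ := sub_nonneg.2 (real_inner_le_norm a b)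
  have hsos : κ * ‖a‖ ^ 2 + κ' / (κ - κ') * κ * ‖b‖ ^ 2 - κ' * ‖a + b‖ ^ 2
      = (((κ - κ') * ‖a‖ - κ' * ‖b‖) ^ 2 + 2 * κ' * (κ - κ') * (‖a‖ * ‖b‖ - ⟪a, b⟫))
        / (κ - κ') := by
    rw [norm_add_sq_real]
    field_simp
    ring
  have : 0 ≤ (((κ - κ') * ‖a‖ - κ' * ‖b‖) ^ 2 + 2 * κ' * (κ - κ') * (‖a‖ * ‖b‖ - ⟪a, b⟫))
      / (κ - κ') := by positivity
  linarith

lemma StrongConvexOn.add_half_mul_norm_sub_sq {s : Set E} {F : E → ℝ} {μ : ℝ}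
    (hF : StrongConvexOn s μ F) (lam : ℝ) (c : E) :
    StrongConvexOn s (μ + lam) fun z ↦ F z + lam / 2 * ‖z - c‖ ^ 2 := by
  refine ⟨hF.1, fun x hx y hy a b ha hb hab ↦ ?_⟩
  have hFxy := hF.2 hx hy ha hb hab
  have hc : a • x + b • y - c = a • (x - c) + b • (y - c) := by
    rw [smul_sub, smul_sub, sub_add_sub_comm, ← add_smul, hab, one_smul]
  simp only [smul_eq_mul] at hFxy ⊢
  rw [hc, norm_smul_add_smul_sq hab, sub_sub_sub_cancel_right]
  linear_combination hFxy

lemma StrongConvexOn.add_half_mul_norm_sub_sq_le_of_isMinOn {s : Set E} {f : E → ℝ} {m : ℝ}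
    {x₀ z : E} (hf : StrongConvexOn s m f) (hmin : IsMinOn f s x₀) (hx₀ : x₀ ∈ s) (hz : z ∈ s) :
    f x₀ + m / 2 * ‖z - x₀‖ ^ 2 ≤ f z := by
  have hbound : ∀ t ∈ Ioc (0 : ℝ) 1, (1 - t) * (m / 2 * ‖z - x₀‖ ^ 2) ≤ f z - f x₀ := by
    rintro t ⟨ht0, ht1⟩
    have hconv := hf.2 hx₀ hz (sub_nonneg.2 ht1) ht0.le (sub_add_cancel 1 t)
    have hle := isMinOn_iff.1 hmin _ (hf.1 hx₀ hz (sub_nonneg.2 ht1) ht0.le (sub_add_cancel 1 t))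
    rw [norm_sub_rev] at hconv
    simp only [smul_eq_mul] at hconv
    refine le_of_mul_le_mul_left ?_ ht0
    linarith
  have hlim : Tendsto (fun t : ℝ ↦ (1 - t) * (m / 2 * ‖z - x₀‖ ^ 2)) (𝓝[>] 0)
      (𝓝 (m / 2 * ‖z - x₀‖ ^ 2)) := by
    refine Tendsto.mono_left ?_ nhdsWithin_le_nhds
    exact Continuous.tendsto' (by fun_prop) 0 _ (by simp)
  linarith [le_of_tendsto hlim (eventually_of_mem (Ioc_mem_nhdsGT zero_lt_one) hbound)]

lemma add_half_mul_norm_sub_sq_le_of_le_add {f : E → ℝ} {κ κ' ε : ℝ} {x₀ x₁ : E}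
    (hκ' : 0 ≤ κ') (hκ : κ' < κ) (hgrowth : ∀ z, f x₀ + κ / 2 * ‖z - x₀‖ ^ 2 ≤ f z)
    (hx₁ : f x₁ ≤ f x₀ + ε) (z : E) :
    f x₀ - κ' / (κ - κ') * ε + κ' / 2 * ‖z - x₁‖ ^ 2 ≤ f z := by
  have hyoung := mul_norm_add_sq_le hκ' hκ (z - x₀) (x₀ - x₁)
  rw [sub_add_sub_cancel] at hyoung
  have hdist : κ * ‖x₀ - x₁‖ ^ 2 ≤ 2 * ε := by
    have := hgrowth x₁
    rw [norm_sub_rev] at this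
    linarith
  have hr : 0 ≤ κ' / (κ - κ') := div_nonneg hκ' (sub_pos.2 hκ).le
  have := mul_le_mul_of_nonneg_left hdist hr
  linarith [hgrowth z]

lemma half_mul_norm_sub_sq_sub_half_mul_norm_sub_sq {m lam : ℝ} (hm : m ≠ 0) (hlam : lam ≠ 0)
    {y x₁ g : E} (hg : g = lam • (y - x₁)) (z : E) :
    (m + lam) / 2 * ‖z - x₁‖ ^ 2 - lam / 2 * ‖z - y‖ ^ 2
      = m / 2 * ‖z - (y - (1 / m + 1 / lam) • g)‖ ^ 2 - (1 / m + 1 / lam) / 2 * ‖g‖ ^ 2 := by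
  have h₁ : z - x₁ = (z - y) + (1 / lam) • g := by
    rw [hg, smul_smul, one_div_mul_cancel hlam, one_smul, sub_add_sub_cancel]
  have h₂ : z - (y - (1 / m + 1 / lam) • g) = (z - y) + (1 / m + 1 / lam) • g := by abel
  rw [h₁, h₂, norm_add_sq_real, norm_add_sq_real, real_inner_smul_right, real_inner_smul_right,
    norm_smul, norm_smul, Real.norm_eq_abs, Real.norm_eq_abs, mul_pow, mul_pow, sq_abs, sq_abs]
  field_simp
  ring

lemma StrongConvexOn.quadratic_lower_bound_of_approx_prox {F : E → ℝ} {m lam ε : ℝ}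
    {y x₀ x₁ g : E} (hF : StrongConvexOn univ (2 * m) F) (hm : 0 < m) (hlam : 0 < lam)
    (hmin : IsMinOn (fun z ↦ F z + lam / 2 * ‖z - y‖ ^ 2) univ x₀)
    (hx₁ : F x₁ + lam / 2 * ‖x₁ - y‖ ^ 2 ≤ F x₀ + lam / 2 * ‖x₀ - y‖ ^ 2 + ε)
    (hg : g = lam • (y - x₁)) (z : E) :
    F x₁ - (1 + (m + lam) / m) * ε - ‖g‖ ^ 2 / (2 * m)
      + m / 2 * ‖z - (y - (1 / m + 1 / lam) • g)‖ ^ 2 ≤ F z := by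
  have hgrowth := fun z ↦
    (hF.add_half_mul_norm_sub_sq lam y).add_half_mul_norm_sub_sq_le_of_isMinOn hmin
      (mem_univ x₀) (mem_univ z)
  have hlower := add_half_mul_norm_sub_sq_le_of_le_add (f := fun z ↦ F z + lam / 2 * ‖z - y‖ ^ 2)
    (κ := 2 * m + lam) (κ' := m + lam) (by positivity) (by linarith) hgrowth hx₁ z
  rw [show 2 * m + lam - (m + lam) = m by ring] at hlower
  have hsquare := half_mul_norm_sub_sq_sub_half_mul_norm_sub_sq hm.ne' hlam.ne' hg z
  have hg₁ : lam / 2 * ‖x₁ - y‖ ^ 2 - (1 / m + 1 / lam) / 2 * ‖g‖ ^ 2 = -(‖g‖ ^ 2 / (2 * m)) := by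
    rw [hg, norm_smul, norm_sub_rev, Real.norm_of_nonneg hlam.le]
    field_simp
    ring
  linarith

lemma quadratic_lower_bound_convexComb {F : E → ℝ} {m a b θ : ℝ} {p q : E}
    (hθ₀ : 0 ≤ θ) (hθ₁ : θ ≤ 1)
    (hp : ∀ z, a + m / 2 * ‖z - p‖ ^ 2 ≤ F z) (hq : ∀ z, b + m / 2 * ‖z - q‖ ^ 2 ≤ F z) (z : E) :
    (1 - θ) * a + θ * b + m / 2 * θ * (1 - θ) * ‖p - q‖ ^ 2
      + m / 2 * ‖z - ((1 - θ) • p + θ • q)‖ ^ 2 ≤ F z := by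
  have hz : z - ((1 - θ) • p + θ • q) = (1 - θ) • (z - p) + θ • (z - q) := by module
  rw [hz, norm_smul_add_smul_sq (sub_add_cancel 1 θ), sub_sub_sub_cancel_left, norm_sub_rev q p]
  have := mul_le_mul_of_nonneg_left (hp z) (sub_nonneg.2 hθ₁)
  have := mul_le_mul_of_nonneg_left (hq z) hθ₀
  linarith

lemma norm_sq_div_le_of_barycentre {m lam θ : ℝ} {x v y : E} (hm : 0 < m) (hlam : 0 < lam)
    (hθ₀ : 0 ≤ θ) (hθ₁ : θ ≤ 1) (hθm : θ ^ 2 * (m + lam) = m) (hy : (1 + θ) • y = x + θ • v)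
    (g : E) :
    ‖g‖ ^ 2 / (2 * m) ≤ m / 2 * (1 - θ) * (‖x - (y - (1 / m + 1 / lam) • g)‖ ^ 2
      + θ * ‖v - (y - (1 / m + 1 / lam) • g)‖ ^ 2) := by
  set a := 1 / m + 1 / lam with ha
  set w := y - a • g with hw
  have hJensen : (1 + θ) * (a ^ 2 * ‖g‖ ^ 2) ≤ ‖x - w‖ ^ 2 + θ * ‖v - w‖ ^ 2 := by
    have hyw : (1 + θ) • (a • g) = (x - w) + θ • (v - w) := by
      rw [hw]
      linear_combination (norm := module) hy
    have := norm_add_smul_sq_le hθ₀ (x - w) (v - w)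
    rw [← hyw, norm_smul, norm_smul, Real.norm_of_nonneg (by positivity), Real.norm_eq_abs,
      mul_pow, mul_pow, sq_abs] at this
    nlinarith
  have hcoef : m / 2 * (1 - θ) * (1 + θ) * a ^ 2 = (m + lam) / lam / (2 * m) := by
    have hθ2 : θ ^ 2 = m / (m + lam) := by field_simp; linarith
    rw [mul_assoc _ (1 - θ), show (1 - θ) * (1 + θ) = 1 - θ ^ 2 by ring, hθ2, ha]
    field_simp
    ring
  calc ‖g‖ ^ 2 / (2 * m) ≤ ‖g‖ ^ 2 / (2 * m) * ((m + lam) / lam) :=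
        le_mul_of_one_le_right (by positivity) ((one_le_div hlam).2 (by linarith))
    _ = m / 2 * (1 - θ) * ((1 + θ) * (a ^ 2 * ‖g‖ ^ 2)) := by
        rw [show m / 2 * (1 - θ) * ((1 + θ) * (a ^ 2 * ‖g‖ ^ 2))
          = m / 2 * (1 - θ) * (1 + θ) * a ^ 2 * ‖g‖ ^ 2 by ring, hcoef]
        ring
    _ ≤ m / 2 * (1 - θ) * (‖x - w‖ ^ 2 + θ * ‖v - w‖ ^ 2) := by
        have : 0 ≤ m / 2 * (1 - θ) := mul_nonneg (by positivity) (sub_nonneg.2 hθ₁)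
        gcongr

theorem accelerated_prox_step {F : E → ℝ} {m lam θ ψ fstar : ℝ} {v x y xp g : E}
    (hF : StrongConvexOn univ (2 * m) F) (hm : 0 < m) (hlam : 0 < lam) (hθ : 0 ≤ θ)
    (hθm : θ ^ 2 * (m + lam) = m) (hlower : ∀ z, ψ + m / 2 * ‖z - v‖ ^ 2 ≤ F z)
    (hy : (1 + θ) • y = x + θ • v)
    (hfstar : IsLeast (range fun z ↦ F z + lam / 2 * ‖z - y‖ ^ 2) fstar)
    (hxp : F xp + lam / 2 * ‖xp - y‖ ^ 2 - fstar ≤ θ ^ 3 / 4 * (F x - ψ))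
    (hg : g = lam • (y - xp)) :
    ∃ ψp, (∀ z, ψp + m / 2 * ‖z - ((1 - θ) • v + θ • (y - (1 / m + 1 / lam) • g))‖ ^ 2 ≤ F z) ∧
      F xp - ψp ≤ (1 - θ / 2) * (F x - ψ) := by
  obtain ⟨x₀, hx₀⟩ := hfstar.1
  have hmin : IsMinOn (fun z ↦ F z + lam / 2 * ‖z - y‖ ^ 2) univ x₀ :=
    isMinOn_iff.2 fun z _ ↦ hx₀.trans_le (hfstar.2 ⟨z, rfl⟩)
  set w := y - (1 / m + 1 / lam) • g
  set ε := θ ^ 3 / 4 * (F x - ψ)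
  set ψ₂ := F xp - (1 + (m + lam) / m) * ε - ‖g‖ ^ 2 / (2 * m) with hψ₂
  have hprox : ∀ z, ψ₂ + m / 2 * ‖z - w‖ ^ 2 ≤ F z :=
    hF.quadratic_lower_bound_of_approx_prox hm hlam hmin (by simp only at hx₀; linarith) hg
  have hθ₁ : θ ≤ 1 :=
    (pow_le_one_iff_of_nonneg hθ two_ne_zero).1 (by nlinarith [add_pos hm hlam])
  refine ⟨_, quadratic_lower_bound_convexComb hθ hθ₁ hlower hprox, ?_⟩
  have hgap : 0 ≤ F x - ψ := by
    have : 0 ≤ m / 2 * ‖x - v‖ ^ 2 := by positivity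
    linarith [hlower x]
  have herr : (1 + (m + lam) / m) * ε ≤ θ / 2 * (F x - ψ) := by
    have hρ : (m + lam) / m * θ ^ 2 = 1 := by field_simp; linarith
    calc (1 + (m + lam) / m) * ε = (θ ^ 3 + (m + lam) / m * θ ^ 2 * θ) / 4 * (F x - ψ) := by ring
      _ = (θ ^ 3 + θ) / 4 * (F x - ψ) := by rw [hρ, one_mul]
      _ ≤ θ / 2 * (F x - ψ) := mul_le_mul_of_nonneg_right (by nlinarith) hgap
  have hbary := norm_sq_div_le_of_barycentre hm hlam hθ hθ₁ hθm hy g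
  have hprox_x := mul_le_mul_of_nonneg_left (hprox x) (sub_nonneg.2 hθ₁)
  calc F xp - ((1 - θ) * ψ + θ * ψ₂ + m / 2 * θ * (1 - θ) * ‖v - w‖ ^ 2)
      = (1 - θ) * (F xp - ψ) + θ * (F xp - ψ₂) - m / 2 * θ * (1 - θ) * ‖v - w‖ ^ 2 := by ring
    _ ≤ (1 - θ) * (F x - ψ) + (F xp - ψ₂)
        - m / 2 * (1 - θ) * (‖x - w‖ ^ 2 + θ * ‖v - w‖ ^ 2) := by linarith
    _ ≤ (1 - θ / 2) * (F x - ψ) := by linarith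
end

/-- Lemma: one step of Accelerated APPA maintains a quadratic
lower bound and contracts the gap. -/
theorem stmt4 {d : ℕ} (F : EuclideanSpace ℝ (Fin d) → ℝ) (μ : ℝ) (hμ : 0 < μ)
    (hsc : ConvexOn ℝ Set.univ (fun z => F z - μ / 2 * ‖z‖ ^ 2))
    (μ' : ℝ) (hμ' : μ' = μ / 2)
    (lam : ℝ) (hlam : 3 * μ' ≤ lam)
    (ρ : ℝ) (hρ : ρ = (μ' + lam) / μ')
    (v x : EuclideanSpace ℝ (Fin d)) (ψ : ℝ)
    (hlower : ∀ z, F z ≥ ψ + μ' / 2 * ‖z - v‖ ^ 2)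
    (y : EuclideanSpace ℝ (Fin d))
    (hy : y = (1 / (1 + ρ ^ (-(1 / 2) : ℝ))) • x
        + (ρ ^ (-(1 / 2) : ℝ) / (1 + ρ ^ (-(1 / 2) : ℝ))) • v)
    (fstar : ℝ)
    (hfstar : IsLeast (Set.range (fun z => F z + lam / 2 * ‖z - y‖ ^ 2)) fstar)
    (xp : EuclideanSpace ℝ (Fin d))
    (hxp : (F xp + lam / 2 * ‖xp - y‖ ^ 2) - fstar ≤ ρ ^ (-(3 / 2) : ℝ) / 4 * (F x - ψ))
    (g : EuclideanSpace ℝ (Fin d)) (hg : g = lam • (y - xp))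
    (vp : EuclideanSpace ℝ (Fin d))
    (hvp : vp = (1 - ρ ^ (-(1 / 2) : ℝ)) • v
        + ρ ^ (-(1 / 2) : ℝ) • (y - (1 / μ' + 1 / lam) • g)) :
    ∃ ψp : ℝ,
      (∀ z, F z ≥ ψp + μ' / 2 * ‖z - vp‖ ^ 2) ∧
      F xp - ψp ≤ (1 - ρ ^ (-(1 / 2) : ℝ) / 2) * (F x - ψ) := by
  have hm : 0 < μ' := by linarith
  have hlam₀ : 0 < lam := by linarith
  have hρ₀ : 0 < ρ := by rw [hρ]; positivity
  set θ := ρ ^ (-(1 / 2) : ℝ) with hθ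
  have hθ₀ : 0 < θ := Real.rpow_pos_of_pos hρ₀ _
  have hθm : θ ^ 2 * (μ' + lam) = μ' := by
    rw [hθ, ← Real.rpow_natCast, ← Real.rpow_mul hρ₀.le,
      show (-(1 / 2) : ℝ) * (2 : ℕ) = -1 by norm_num, Real.rpow_neg_one, hρ]
    field_simp
  have hθ3 : ρ ^ (-(3 / 2) : ℝ) = θ ^ 3 := by
    rw [hθ, ← Real.rpow_natCast, ← Real.rpow_mul hρ₀.le]
    norm_num
  have hF : StrongConvexOn univ (2 * μ') F := by
    rw [hμ', mul_div_cancel₀ μ two_ne_zero]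
    exact strongConvexOn_iff_convex.2 hsc
  have hy' : (1 + θ) • y = x + θ • v := by
    rw [hy, smul_add, smul_smul, smul_smul, mul_one_div_cancel (by positivity),
      mul_div_cancel₀ θ (by positivity), one_smul]
  rw [hθ3] at hxp
  subst hvp
  exact accelerated_prox_step hF hm hlam₀ hθ₀.le hθm hlower hy' hfstar hxp hg
end

section
/- Let F : ℝ^d → ℝ be μ-strongly convex (μ > 0) attaining minimum value F*, set μ' := μ/2, let λ > 0, and let x⁽⁰⁾ ∈ ℝ^d. Define ψ*₀ := F(x⁽⁰⁾) − ((λ + 2μ')/μ')·(F(x⁽⁰⁾) − F*). Then F(x) ≥ ψ*₀ + (μ'/2)‖x − x⁽⁰⁾‖₂² for all x ∈ ℝ^d; in particular F(x⁽⁰⁾) − ψ*₀ = ((λ + 2μ')/μ')·(F(x⁽⁰⁾) − F*). -/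
/-!
Strong convexity gives quadratic growth around the minimiser `x⋆`:
`F x ≥ F⋆ + (μ/2)‖x - x⋆‖²`. Applying this at `x` and at `x₀` and using
`‖x - x₀‖² ≤ 2‖x - x⋆‖² + 2‖x₀ - x⋆‖²` gives `F x ≥ 2F⋆ - F x₀ + (μ/4)‖x - x₀‖²`,
and `ψ₀ ≤ 2F⋆ - F x₀` because `(λ + 2μ')/μ' ≥ 2`.
-/

open Filter Topology

variable {E : Type*} [NormedAddCommGroup E]

theorem sq_norm_sub_le_two_mul_add (x y z : E) :
    ‖x - y‖ ^ 2 ≤ 2 * (‖x - z‖ ^ 2 + ‖y - z‖ ^ 2) :=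
  calc ‖x - y‖ ^ 2 ≤ (‖x - z‖ + ‖y - z‖) ^ 2 := by
        gcongr
        simpa [norm_sub_rev y z] using norm_sub_le_norm_sub_add_norm_sub x z y
    _ ≤ 2 * (‖x - z‖ ^ 2 + ‖y - z‖ ^ 2) := add_sq_le

variable [NormedSpace ℝ E]

/-- Comparing `f` at the minimiser `y` with `f` at `t • x + (1 - t) • y` gives
`(1 - t) φ ‖x - y‖ ≤ f x - f y` for `t ∈ (0, 1)`; let `t → 0`. -/
theorem UniformConvexOn.add_le_of_isMinOn {s : Set E} {φ : ℝ → ℝ} {f : E → ℝ} {x y : E}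
    (hf : UniformConvexOn s φ f) (hy : IsMinOn f s y) (hys : y ∈ s) (hx : x ∈ s) :
    f y + φ ‖x - y‖ ≤ f x := by
  have hbound : ∀ t ∈ Set.Ioo (0 : ℝ) 1, (1 - t) * φ ‖x - y‖ ≤ f x - f y := by
    rintro t ⟨ht0, ht1⟩
    have hconv := hf.2 hx hys ht0.le (sub_nonneg.2 ht1.le) (add_sub_cancel t 1)
    have hmin : f y ≤ f (t • x + (1 - t) • y) :=
      hy (hf.1 hx hys ht0.le (sub_nonneg.2 ht1.le) (add_sub_cancel t 1))
    simp only [smul_eq_mul] at hconv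
    have : t * ((1 - t) * φ ‖x - y‖) ≤ t * (f x - f y) := by linarith
    exact le_of_mul_le_mul_left this ht0
  have hlim : Tendsto (fun t : ℝ => (1 - t) * φ ‖x - y‖) (𝓝[>] 0) (𝓝 (φ ‖x - y‖)) := by
    have : Continuous (fun t : ℝ => (1 - t) * φ ‖x - y‖) := by fun_prop
    simpa using (this.tendsto 0).mono_left nhdsWithin_le_nhds
  have hev : ∀ᶠ t in 𝓝[>] (0 : ℝ), (1 - t) * φ ‖x - y‖ ≤ f x - f y :=
    Filter.mem_of_superset (Ioo_mem_nhdsGT zero_lt_one) hbound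
  linarith [le_of_tendsto hlim hev]

theorem StrongConvexOn.two_mul_sub_add_le_of_isMinOn {s : Set E} {m : ℝ} {f : E → ℝ}
    {x x₀ y : E} (hf : StrongConvexOn s m f) (hm : 0 ≤ m) (hy : IsMinOn f s y) (hys : y ∈ s)
    (hx : x ∈ s) (hx₀ : x₀ ∈ s) :
    2 * f y - f x₀ + m / 4 * ‖x - x₀‖ ^ 2 ≤ f x := by
  have hgx := UniformConvexOn.add_le_of_isMinOn hf hy hys hx
  have hgx₀ := UniformConvexOn.add_le_of_isMinOn hf hy hys hx₀
  have htri : m / 4 * ‖x - x₀‖ ^ 2 ≤ m / 4 * (2 * (‖x - y‖ ^ 2 + ‖x₀ - y‖ ^ 2)) := by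
    gcongr
    exact sq_norm_sub_le_two_mul_add x x₀ y
  linarith

/-- Lemma: valid initial lower bound for Accelerated APPA. -/
theorem stmt6 {d : ℕ} (F : EuclideanSpace ℝ (Fin d) → ℝ) (μ : ℝ) (hμ : 0 < μ)
    (hsc : ConvexOn ℝ Set.univ (fun z => F z - μ / 2 * ‖z‖ ^ 2))
    (Fstar : ℝ) (hF : IsLeast (Set.range F) Fstar)
    (μ' : ℝ) (hμ' : μ' = μ / 2)
    (lam : ℝ) (hlam : 0 < lam)
    (x₀ : EuclideanSpace ℝ (Fin d))
    (ψ₀ : ℝ) (hψ₀ : ψ₀ = F x₀ - (lam + 2 * μ') / μ' * (F x₀ - Fstar)) :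
    (∀ x, F x ≥ ψ₀ + μ' / 2 * ‖x - x₀‖ ^ 2) ∧
    F x₀ - ψ₀ = (lam + 2 * μ') / μ' * (F x₀ - Fstar) := by
  refine ⟨fun x => ?_, by rw [hψ₀]; ring⟩
  obtain ⟨⟨xs, rfl⟩, hlb⟩ := hF
  have hmin : IsMinOn F Set.univ xs := fun z _ => hlb ⟨z, rfl⟩
  have hgrowth := (strongConvexOn_iff_convex.2 hsc).two_mul_sub_add_le_of_isMinOn hμ.le hmin
    (Set.mem_univ xs) (Set.mem_univ x) (Set.mem_univ x₀)
  have hμ'pos : 0 < μ' := by linarith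
  have hcoef : 2 ≤ (lam + 2 * μ') / μ' := by rw [le_div_iff₀ hμ'pos]; linarith
  have hψ₀_le : ψ₀ ≤ 2 * F xs - F x₀ := by
    have := mul_le_mul_of_nonneg_right hcoef (sub_nonneg.2 (hlb ⟨x₀, rfl⟩))
    linarith
  subst hμ'
  linarith
end

section
/- Let F : ℝ^d → ℝ be μ-strongly convex (μ > 0) attaining minimum value F*, set μ' := μ/2, let λ ≥ 3μ', ρ := (μ' + λ)/μ', and c > 1. Under the Accelerated APPA recursion (v⁽⁰⁾ = x⁽⁰⁾; for each t: y⁽ᵗ⁾ = (1/(1 + ρ^{−1/2}))·x⁽ᵗ⁾ + (ρ^{−1/2}/(1 + ρ^{−1/2}))·v⁽ᵗ⁾; x⁽ᵗ⁺¹⁾ satisfies f_{y⁽ᵗ⁾,λ}(x⁽ᵗ⁺¹⁾) − f*_{y⁽ᵗ⁾,λ} ≤ (ρ^{−3/2}/8)·(f_{y⁽ᵗ⁾,λ}(x⁽ᵗ⁾) − f*_{y⁽ᵗ⁾,λ}); g⁽ᵗ⁾ = λ(y⁽ᵗ⁾ − x⁽ᵗ⁺¹⁾); v⁽ᵗ⁺¹⁾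 = (1 − ρ^{−1/2})·v⁽ᵗ⁾ + ρ^{−1/2}·(y⁽ᵗ⁾ − (1/μ' + 1/λ)g⁽ᵗ⁾)), if T is a natural number with T ≥ 2·ρ^{1/2}·log(c·(λ + 2μ')/μ'), then F(x⁽ᵀ⁾) − F* ≤ (1/c)·(F(x⁽⁰⁾) − F*). -/
/-!
With `τ = ρ^{-1/2}` and `κ = λτ² = μ'λ/(μ'+λ)`, the potential
`Φ_t = F(x_t) - F* + κ/2 ‖v_t - x*‖²` contracts by the factor `1 - τ/2` at every step.
Through the Moreau envelope `f*(s) = min_z F(z) + λ/2 ‖z - s‖²`, which is `μλ/(μ+λ)`-strongly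
convex with gradient `λ(s - p)` at `s` (`p` the proximal point of `s`), a step of the method is
Nesterov's accelerated gradient step on `f*` with the inexact gradient `g_t`. Strong convexity
of the subproblem bounds the gradient error by `‖g_t - ∇f*(y_t)‖² ≤ 2λδ_t`, `δ_t` the
subproblem gap; Young's inequality absorbs it into the slack between the true modulus
`2μ'λ/(2μ'+λ)` of `f*` and the modulus `κ` of the potential, and the accuracy condition together
with `f_{y_t}(x_t) - f*(y_t) ≤ 2Φ_t` leaves an error of at most `τ/2 · Φ_t`. Finally
`(1 - τ/2)^T ≤ exp(-τT/2) ≤ μ'/(c(λ+2μ'))` and `Φ_0 ≤ 3/2 (F(x_0) - F*)`.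
-/

open Set Filter Topology
open scoped RealInnerProductSpace

variable {E : Type*} [NormedAddCommGroup E]

section InnerProductSpace

variable [InnerProductSpace ℝ E]

theorem StrongConvexOn.add_mul_sq_norm_sub_le_of_isMinOn {f : E → ℝ} {m : ℝ}
    (hf : StrongConvexOn univ m f)
    {p : E} (hp : IsMinOn f univ p) (z : E) : f p + m / 2 * ‖z - p‖ ^ 2 ≤ f z := by
  -- strong convexity on the segment from `p` to `z` gives the bound up to a factor `1 - t`;
  -- then let `t → 0⁺`
  have hK : ∀ t ∈ Ioo (0 : ℝ) 1, (1 - t) * (m / 2 * ‖z - p‖ ^ 2) ≤ f z - f p := by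
    rintro t ⟨ht0, ht1⟩
    have hmix := hf.2 (mem_univ z) (mem_univ p) ht0.le (sub_nonneg.2 ht1.le) (add_sub_cancel t 1)
    have hmin := isMinOn_univ_iff.1 hp (t • z + (1 - t) • p)
    simp only [smul_eq_mul] at hmix
    refine le_of_mul_le_mul_left ?_ ht0
    linear_combination hmix + hmin
  have hlim : Tendsto (fun t : ℝ => (1 - t) * (m / 2 * ‖z - p‖ ^ 2)) (𝓝[>] 0)
      (𝓝 (m / 2 * ‖z - p‖ ^ 2)) :=
    tendsto_nhdsWithin_of_tendsto_nhds <|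
      ((continuous_const.sub continuous_id).mul continuous_const).tendsto' _ _ (by simp)
  linarith [le_of_tendsto hlim (eventually_of_mem (Ioo_mem_nhdsGT zero_lt_one) hK)]

theorem StrongConvexOn.add_half_mul_sq_norm_sub {f : E → ℝ} {m : ℝ}
    (hf : StrongConvexOn univ m f) (lam : ℝ) (s : E) :
    StrongConvexOn univ (m + lam) fun z => f z + lam / 2 * ‖z - s‖ ^ 2 := by
  rw [strongConvexOn_iff_convex] at hf ⊢
  have haff : ConvexOn ℝ univ fun z : E => ⟪-lam • s, z⟫ + lam / 2 * ‖s‖ ^ 2 :=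
    (((innerₛₗ ℝ (-lam • s)).restrictScalars ℝ).convexOn convex_univ).add_const _
  refine (hf.add haff).congr fun z _ => ?_
  simp only [Pi.add_apply, norm_sub_sq_real, real_inner_smul_left, real_inner_comm z s]
  ring

theorem neg_sq_norm_div_le_inner_add {θ : ℝ} (hθ : 0 < θ) (a b : E) :
    -(‖a‖ ^ 2 / (2 * θ)) ≤ ⟪a, b⟫ + θ / 2 * ‖b‖ ^ 2 := by
  have key : ⟪a, b⟫ + θ / 2 * ‖b‖ ^ 2 + ‖a‖ ^ 2 / (2 * θ) = ‖a + θ • b‖ ^ 2 / (2 * θ) := by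
    rw [norm_add_sq_real, norm_smul, real_inner_smul_right, Real.norm_of_nonneg hθ.le]
    field_simp
    ring
  have : 0 ≤ ‖a + θ • b‖ ^ 2 / (2 * θ) := by positivity
  linarith

-- equality at `a = (λ / (m + λ)) • w`; this constant is the modulus of the Moreau envelope
theorem half_mul_harmonic_sq_norm_le {m lam : ℝ} (hml : 0 < m + lam) (a w : E) :
    m * lam / (m + lam) / 2 * ‖w‖ ^ 2 ≤ m / 2 * ‖a‖ ^ 2 + lam / 2 * ‖w - a‖ ^ 2 := by
  have key : m / 2 * ‖a‖ ^ 2 + lam / 2 * ‖w - a‖ ^ 2 - m * lam / (m + lam) / 2 * ‖w‖ ^ 2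
      = ‖(m + lam) • a - lam • w‖ ^ 2 / (2 * (m + lam)) := by
    rw [norm_sub_sq_real, norm_sub_sq_real, norm_smul, norm_smul, real_inner_smul_left,
      real_inner_smul_right, Real.norm_eq_abs, Real.norm_eq_abs, mul_pow, mul_pow, sq_abs, sq_abs,
      real_inner_comm w a]
    field_simp
    ring
  have : 0 ≤ ‖(m + lam) • a - lam • w‖ ^ 2 / (2 * (m + lam)) := by positivity
  linarith

theorem sq_norm_sub_le_of_one_add_smul_eq {τ : ℝ} {x v y : E} (hτ : 0 ≤ τ)
    (hy : (1 + τ) • y = x + τ • v) (z : E) :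
    ‖x - y‖ ^ 2 ≤ 2 * τ ^ 2 * (‖x - z‖ ^ 2 + ‖v - z‖ ^ 2) := by
  have h : (1 + τ) • (x - y) = τ • ((x - z) - (v - z)) := by rw [smul_sub, hy]; module
  have hn := congrArg norm h
  rw [norm_smul, norm_smul, Real.norm_of_nonneg (by linarith), Real.norm_of_nonneg hτ] at hn
  have hxy : ‖x - y‖ ≤ τ * (‖x - z‖ + ‖v - z‖) := by
    nlinarith [norm_nonneg (x - y), norm_sub_le (x - z) (v - z)]
  calc ‖x - y‖ ^ 2 ≤ (τ * (‖x - z‖ + ‖v - z‖)) ^ 2 := pow_le_pow_left₀ (norm_nonneg _) hxy 2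
    _ ≤ 2 * τ ^ 2 * (‖x - z‖ ^ 2 + ‖v - z‖ ^ 2) := by
      nlinarith [mul_nonneg (sq_nonneg τ) (sq_nonneg (‖x - z‖ - ‖v - z‖))]

section Prox

variable {F : E → ℝ} {μ lam : ℝ} {s p : E}

theorem StrongConvexOn.prox_growth (hF : StrongConvexOn univ μ F)
    (hp : IsMinOn (fun z => F z + lam / 2 * ‖z - s‖ ^ 2) univ p) (z : E) :
    F p + lam / 2 * ‖p - s‖ ^ 2 + (μ + lam) / 2 * ‖z - p‖ ^ 2 ≤ F z + lam / 2 * ‖z - s‖ ^ 2 :=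
  (hF.add_half_mul_sq_norm_sub lam s).add_mul_sq_norm_sub_le_of_isMinOn hp z

theorem StrongConvexOn.subgradient_prox (hF : StrongConvexOn univ μ F)
    (hp : IsMinOn (fun z => F z + lam / 2 * ‖z - s‖ ^ 2) univ p) (z : E) :
    F p + ⟪lam • (s - p), z - p⟫ + μ / 2 * ‖z - p‖ ^ 2 ≤ F z := by
  have h := hF.prox_growth hp z
  rw [show z - s = (z - p) + (p - s) by abel, norm_add_sq_real] at h
  have : ⟪lam • (s - p), z - p⟫ = -(lam * ⟪z - p, p - s⟫) := by
    rw [real_inner_smul_left, real_inner_comm, ← neg_sub p s, inner_neg_right, mul_neg]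
  linarith

theorem StrongConvexOn.sq_norm_smul_sub_prox_le (hF : StrongConvexOn univ μ F) (hμ : 0 ≤ μ)
    (hlam : 0 ≤ lam) (hp : IsMinOn (fun z => F z + lam / 2 * ‖z - s‖ ^ 2) univ p) (z : E) :
    ‖lam • (z - p)‖ ^ 2 ≤
      2 * lam * (F z + lam / 2 * ‖z - s‖ ^ 2 - (F p + lam / 2 * ‖p - s‖ ^ 2)) := by
  have h := hF.prox_growth hp z
  rw [norm_smul, Real.norm_of_nonneg hlam, mul_pow]
  nlinarith [mul_nonneg hlam (mul_nonneg hμ (sq_nonneg ‖z - p‖))]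

theorem StrongConvexOn.moreau_lower_bound {fstar : E → ℝ} (hF : StrongConvexOn univ μ F)
    (hμlam : 0 < μ + lam)
    (hfstar : ∀ s, IsLeast (range fun z => F z + lam / 2 * ‖z - s‖ ^ 2) (fstar s))
    (hp : F p + lam / 2 * ‖p - s‖ ^ 2 = fstar s) (u : E) :
    fstar s + ⟪lam • (s - p), u - s⟫ + μ * lam / (μ + lam) / 2 * ‖u - s‖ ^ 2 ≤ fstar u := by
  have hpmin : IsMinOn (fun z => F z + lam / 2 * ‖z - s‖ ^ 2) univ p :=
    isMinOn_univ_iff.2 fun z => hp ▸ (hfstar s).2 ⟨z, rfl⟩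
  obtain ⟨z, hz⟩ := (hfstar u).1
  dsimp only at hz
  have hsub := hF.subgradient_prox hpmin z
  have hharm := half_mul_harmonic_sq_norm_le hμlam (z - p) (u - s)
  have hzu :
      ‖z - u‖ ^ 2 = ‖u - s - (z - p)‖ ^ 2 + 2 * ⟪u - s - (z - p), s - p⟫ + ‖s - p‖ ^ 2 := by
    rw [← norm_add_sq_real, ← norm_neg]
    congr 2
    abel
  rw [real_inner_smul_left] at hsub ⊢
  rw [inner_sub_left, real_inner_comm (s - p) (u - s), real_inner_comm (s - p) (z - p)] at hzu
  rw [norm_sub_rev p s] at hp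
  linear_combination hsub + hharm - lam / 2 * hzu - hp + hz

end Prox

section AcceleratedStep

variable {lam τ κ θ δ Fx Fxp Fs φy : ℝ} {x v y vp xstar g gs : E}

/- `φy` and `gs` stand for the value and the gradient at `y` of a strongly convex function `φ`
(the Moreau envelope) and `g` for an inexact gradient; `hx` and `hxstar` bound `Fx` and `Fs`
from below by the tangent paraboloid of `φ` at `y`. -/
theorem accelerated_step_exact (hlam : 0 < lam) (hτ0 : 0 < τ) (hτ1 : τ ≤ 1)
    (hκ : κ = lam * τ ^ 2) (hy : (1 + τ) • y = x + τ • v)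
    (hvp : vp = (1 - τ) • v + τ • (y - κ⁻¹ • g)) (hxp : Fxp = φy + δ - ‖g‖ ^ 2 / (2 * lam))
    (hx : φy + ⟪gs, x - y⟫ ≤ Fx)
    (hxstar : φy + ⟪gs, xstar - y⟫ + (κ + θ) / 2 * ‖xstar - y‖ ^ 2 ≤ Fs) :
    Fxp - Fs + κ / 2 * ‖vp - xstar‖ ^ 2 ≤ (1 - τ) * (Fx - Fs + κ / 2 * ‖v - xstar‖ ^ 2) + δ
      - τ * (⟪g - gs, y - xstar⟫ + θ / 2 * ‖y - xstar‖ ^ 2)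
      - τ * (1 - τ) * (⟪g - gs, v - y⟫ + κ / 2 * ‖v - y‖ ^ 2) := by
  subst hκ
  obtain ⟨e, rfl⟩ : ∃ e, gs = g - e := ⟨g - gs, (sub_sub_cancel g gs).symm⟩
  have hxy : x - y = τ • ((y - xstar) - (v - xstar)) := by
    rw [show x = (1 + τ) • y - τ • v by rw [hy]; abel]; module
  have hvp' :
      vp - xstar = (1 - τ) • (v - xstar) + τ • (y - xstar) - (τ * (lam * τ ^ 2)⁻¹) • g := by
    rw [hvp]; module
  rw [hxy] at hx
  rw [show xstar - y = -(y - xstar) by abel] at hxstar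
  rw [hvp', sub_sub_cancel, show v - y = (v - xstar) - (y - xstar) by abel]
  generalize v - xstar = A at *
  generalize y - xstar = B at *
  simp only [norm_add_sq_real, norm_sub_sq_real, norm_neg, norm_smul, Real.norm_eq_abs, mul_pow,
    sq_abs, inner_add_left, inner_sub_left, inner_sub_right, inner_neg_right,
    real_inner_smul_left, real_inner_smul_right] at hx hxstar ⊢
  have h1 := mul_le_mul_of_nonneg_left hx (sub_nonneg.2 hτ1)
  have h2 := mul_le_mul_of_nonneg_left hxstar hτ0.le
  rw [hxp, real_inner_comm g A, real_inner_comm g B]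
  linear_combination (norm := skip) h1 + h2
  field_simp
  linarith

theorem accelerated_step {m : ℝ} (hlam : 0 < lam) (hτ0 : 0 < τ) (hτ1 : τ ≤ 1)
    (hκ : κ = lam * τ ^ 2) (hm : 8 / 5 * κ ≤ m) (hy : (1 + τ) • y = x + τ • v)
    (hvp : vp = (1 - τ) • v + τ • (y - κ⁻¹ • g)) (hxp : Fxp = φy + δ - ‖g‖ ^ 2 / (2 * lam))
    (hx : φy + ⟪gs, x - y⟫ ≤ Fx)
    (hxstar : φy + ⟪gs, xstar - y⟫ + m / 2 * ‖xstar - y‖ ^ 2 ≤ Fs)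
    (herr : ‖g - gs‖ ^ 2 ≤ 2 * lam * δ) :
    Fxp - Fs + κ / 2 * ‖vp - xstar‖ ^ 2 ≤
      (1 - τ) * (Fx - Fs + κ / 2 * ‖v - xstar‖ ^ 2) + δ + 8 / 3 * (δ / τ) := by
  have hκ0 : 0 < κ := by rw [hκ]; positivity
  have hxstar' : φy + ⟪gs, xstar - y⟫ + (κ + (m - κ)) / 2 * ‖xstar - y‖ ^ 2 ≤ Fs := by
    rwa [add_sub_cancel]
  have hexact := accelerated_step_exact hlam hτ0 hτ1 hκ hy hvp hxp hx hxstar'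
  have hyoung₁ := neg_sq_norm_div_le_inner_add (by linarith : 0 < m - κ) (g - gs) (y - xstar)
  have hyoung₂ := neg_sq_norm_div_le_inner_add hκ0 (g - gs) (v - y)
  have herr' : τ * (‖g - gs‖ ^ 2 / (2 * (m - κ))) + τ * (1 - τ) * (‖g - gs‖ ^ 2 / (2 * κ))
      ≤ 8 / 3 * (δ / τ) :=
    calc τ * (‖g - gs‖ ^ 2 / (2 * (m - κ))) + τ * (1 - τ) * (‖g - gs‖ ^ 2 / (2 * κ))
        ≤ τ * (‖g - gs‖ ^ 2 / (2 * (3 / 5 * κ))) + τ * (‖g - gs‖ ^ 2 / (2 * κ)) := by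
          gcongr
          · linarith
          · nlinarith
      _ = 4 / 3 * ‖g - gs‖ ^ 2 / (lam * τ) := by rw [hκ]; field_simp; ring
      _ ≤ 4 / 3 * (2 * lam * δ) / (lam * τ) := by gcongr
      _ = 8 / 3 * (δ / τ) := by field_simp; ring
  nlinarith [mul_le_mul_of_nonneg_left hyoung₁ hτ0.le,
    mul_le_mul_of_nonneg_left hyoung₂ (mul_nonneg hτ0.le (sub_nonneg.2 hτ1))]

end AcceleratedStep

end InnerProductSpace

theorem le_half_of_sq_mul_eq {μ' lam τ : ℝ} (hμ' : 0 < μ') (hlam : 3 * μ' ≤ lam) (hτ : 0 < τ)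
    (hτ2 : τ ^ 2 * (μ' + lam) = μ') : τ ≤ 1 / 2 := by
  have : τ ^ 2 ≤ 1 / 4 := by nlinarith [mul_le_mul_of_nonneg_left hlam (sq_nonneg τ)]
  nlinarith

theorem add_div_le_half_mul_of_le_cube {τ δ Φ : ℝ} (hτ0 : 0 < τ) (hτ1 : τ ≤ 1 / 2) (hΦ : 0 ≤ Φ)
    (hδ : δ ≤ τ ^ 3 / 4 * Φ) : δ + 8 / 3 * (δ / τ) ≤ τ / 2 * Φ := by
  have hδτ : δ / τ ≤ τ ^ 2 / 4 * Φ := by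
    rw [div_le_iff₀ hτ0]
    linarith
  nlinarith [mul_nonneg (mul_nonneg hτ0.le hτ0.le) hΦ, mul_nonneg hτ0.le hΦ]

theorem one_sub_pow_le_inv_of_log_le {a K : ℝ} {n : ℕ} (ha : a ≤ 1) (hK : 0 < K)
    (h : Real.log K ≤ a * n) : (1 - a) ^ n ≤ K⁻¹ :=
  calc (1 - a) ^ n ≤ Real.exp (-a) ^ n :=
        pow_le_pow_left₀ (by linarith) (Real.one_sub_le_exp_neg a) n
    _ = Real.exp (-(a * n)) := by rw [← Real.exp_nat_mul]; ring_nf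
    _ ≤ Real.exp (-Real.log K) := by gcongr
    _ = K⁻¹ := by rw [Real.exp_neg, Real.exp_log hK]

noncomputable def appaPotential (F : E → ℝ) (κ : ℝ) (xstar x v : E) : ℝ :=
  F x - F xstar + κ / 2 * ‖v - xstar‖ ^ 2

section Potential

variable {F fstar : E → ℝ} {μ lam τ κ δ : ℝ} {xstar x v y xp vp : E}

theorem sub_le_appaPotential (hκ : 0 ≤ κ) : F x - F xstar ≤ appaPotential F κ xstar x v :=
  le_add_of_nonneg_right (by positivity)

theorem appaPotential_nonneg (hxstar : IsMinOn F univ xstar) (hκ : 0 ≤ κ) :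
    0 ≤ appaPotential F κ xstar x v :=
  (sub_nonneg.2 (isMinOn_univ_iff.1 hxstar x)).trans (sub_le_appaPotential hκ)

variable [InnerProductSpace ℝ E]

theorem appaPotential_self_le (hF : StrongConvexOn univ μ F) (hxstar : IsMinOn F univ xstar)
    (hκμ : κ ≤ μ / 2) : appaPotential F κ xstar x x ≤ 3 / 2 * (F x - F xstar) := by
  have hgrowth := hF.add_mul_sq_norm_sub_le_of_isMinOn hxstar x
  have : 0 ≤ (μ / 2 - κ) * ‖x - xstar‖ ^ 2 := mul_nonneg (by linarith) (sq_nonneg _)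
  rw [appaPotential]
  linarith

theorem appaPotential_succ_le_add (hF : StrongConvexOn univ μ F) (hμ : 0 ≤ μ) (hlam : 0 < lam)
    (hfstar : ∀ s, IsLeast (range fun z => F z + lam / 2 * ‖z - s‖ ^ 2) (fstar s))
    (hτ0 : 0 < τ) (hτ1 : τ ≤ 1) (hκ : κ = lam * τ ^ 2) (hκμ : 8 / 5 * κ ≤ μ * lam / (μ + lam))
    (hy : (1 + τ) • y = x + τ • v) (hvp : vp = (1 - τ) • v + τ • (y - κ⁻¹ • lam • (y - xp)))
    (hδ : δ = F xp + lam / 2 * ‖xp - y‖ ^ 2 - fstar y) :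
    appaPotential F κ xstar xp vp ≤
      (1 - τ) * appaPotential F κ xstar x v + δ + 8 / 3 * (δ / τ) := by
  obtain ⟨p, hp⟩ := (hfstar y).1
  dsimp only at hp
  have hpmin : IsMinOn (fun z => F z + lam / 2 * ‖z - y‖ ^ 2) univ p :=
    isMinOn_univ_iff.2 fun z => hp ▸ (hfstar y).2 ⟨z, rfl⟩
  have hlow := hF.moreau_lower_bound (by linarith) hfstar hp
  have hxp : F xp = fstar y + δ - ‖lam • (y - xp)‖ ^ 2 / (2 * lam) := by
    rw [hδ, norm_smul, Real.norm_of_nonneg hlam.le, norm_sub_rev]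
    field_simp
    ring
  have hx : fstar y + ⟪lam • (y - p), x - y⟫ ≤ F x := by
    have : fstar x ≤ F x := by simpa using (hfstar x).2 ⟨x, rfl⟩
    have : 0 ≤ μ * lam / (μ + lam) / 2 * ‖x - y‖ ^ 2 := by positivity
    linarith [hlow x]
  have hxstar : fstar y + ⟪lam • (y - p), xstar - y⟫
      + μ * lam / (μ + lam) / 2 * ‖xstar - y‖ ^ 2 ≤ F xstar := by
    have : fstar xstar ≤ F xstar := by simpa using (hfstar xstar).2 ⟨xstar, rfl⟩
    linarith [hlow xstar]
  have herr : ‖lam • (y - xp) - lam • (y - p)‖ ^ 2 ≤ 2 * lam * δ := by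
    rw [← smul_sub, show y - xp - (y - p) = -(xp - p) by abel, smul_neg, norm_neg, hδ, ← hp]
    exact hF.sq_norm_smul_sub_prox_le hμ hlam.le hpmin xp
  exact accelerated_step hlam hτ0 hτ1 hκ hκμ hy hvp hxp hx hxstar herr

theorem prox_gap_le_two_mul_appaPotential (hF : StrongConvexOn univ μ F) (hlam : 0 ≤ lam)
    (hxstar : IsMinOn F univ xstar)
    (hfstar : ∀ s, IsLeast (range fun z => F z + lam / 2 * ‖z - s‖ ^ 2) (fstar s))
    (hτ : 0 ≤ τ) (hκ : κ = lam * τ ^ 2) (hκμ : κ ≤ μ / 2) (hy : (1 + τ) • y = x + τ • v) :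
    F x + lam / 2 * ‖x - y‖ ^ 2 - fstar y ≤ 2 * appaPotential F κ xstar x v := by
  subst hκ
  obtain ⟨p, hp⟩ := (hfstar y).1
  dsimp only at hp
  have hFp : F xstar ≤ F p := isMinOn_univ_iff.1 hxstar p
  have hp0 : 0 ≤ lam / 2 * ‖p - y‖ ^ 2 := by positivity
  have hgrowth := hF.add_mul_sq_norm_sub_le_of_isMinOn hxstar x
  have hxy := mul_le_mul_of_nonneg_left (sq_norm_sub_le_of_one_add_smul_eq hτ hy xstar)
    (by positivity : 0 ≤ lam / 2)
  have : 0 ≤ (μ / 2 - lam * τ ^ 2) * ‖x - xstar‖ ^ 2 := mul_nonneg (by linarith) (sq_nonneg _)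
  rw [appaPotential]
  linarith

theorem appaPotential_succ_le {μ' : ℝ} {g : E} (hF : StrongConvexOn univ (2 * μ') F)
    (hxstar : IsMinOn F univ xstar)
    (hfstar : ∀ s, IsLeast (range fun z => F z + lam / 2 * ‖z - s‖ ^ 2) (fstar s))
    (hμ' : 0 < μ') (hlam : 3 * μ' ≤ lam) (hτ : 0 < τ) (hτ2 : τ ^ 2 * (μ' + lam) = μ')
    (hy : y = (1 / (1 + τ)) • x + (τ / (1 + τ)) • v)
    (hxp : F xp + lam / 2 * ‖xp - y‖ ^ 2 - fstar y ≤
      τ ^ 3 / 8 * (F x + lam / 2 * ‖x - y‖ ^ 2 - fstar y))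
    (hg : g = lam • (y - xp)) (hvp : vp = (1 - τ) • v + τ • (y - (1 / μ' + 1 / lam) • g)) :
    appaPotential F (lam * τ ^ 2) xstar xp vp ≤
      (1 - τ / 2) * appaPotential F (lam * τ ^ 2) xstar x v := by
  have hlam0 : 0 < lam := by linarith
  have hτ1 := le_half_of_sq_mul_eq hμ' hlam hτ hτ2
  -- the slack between the modulus of the envelope and `κ = λτ²` absorbs the gradient error;
  -- this is where `3μ' ≤ λ` is needed
  have hm : 8 / 5 * (lam * τ ^ 2) ≤ 2 * μ' * lam / (2 * μ' + lam) := by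
    rw [le_div_iff₀ (by positivity)]
    nlinarith [mul_le_mul_of_nonneg_left (by nlinarith : τ ^ 2 ≤ 1 / 4) (mul_pos hlam0 hμ').le]
  have hy' : (1 + τ) • y = x + τ • v := by
    rw [hy, smul_add, smul_smul, smul_smul]
    field_simp
    rw [one_smul]
  have hvp' : vp = (1 - τ) • v + τ • (y - (lam * τ ^ 2)⁻¹ • lam • (y - xp)) := by
    rw [hvp, hg, show 1 / μ' + 1 / lam = (lam * τ ^ 2)⁻¹ by field_simp; linarith]
  have hstep := appaPotential_succ_le_add (xstar := xstar) hF (by linarith) hlam0 hfstar hτ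
    (by linarith) rfl hm hy' hvp' rfl
  have hgap := prox_gap_le_two_mul_appaPotential hF hlam0.le hxstar hfstar hτ.le rfl
    (by nlinarith) hy'
  have hδ : F xp + lam / 2 * ‖xp - y‖ ^ 2 - fstar y ≤
      τ ^ 3 / 4 * appaPotential F (lam * τ ^ 2) xstar x v := by
    nlinarith [pow_pos hτ 3]
  have := add_div_le_half_mul_of_le_cube hτ hτ1 (appaPotential_nonneg hxstar (by positivity)) hδ
  linarith

end Potential

/-- Iteration complexity of Accelerated APPA,
cf. Theorem 1.1. -/
theorem stmt8 {d : ℕ} (F : EuclideanSpace ℝ (Fin d) → ℝ) (μ : ℝ) (hμ : 0 < μ)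
    (hsc : ConvexOn ℝ Set.univ (fun z => F z - μ / 2 * ‖z‖ ^ 2))
    (Fstar : ℝ) (hF : IsLeast (Set.range F) Fstar)
    (μ' : ℝ) (hμ' : μ' = μ / 2)
    (lam : ℝ) (hlam : 3 * μ' ≤ lam)
    (ρ : ℝ) (hρ : ρ = (μ' + lam) / μ')
    (c : ℝ) (hc : 1 < c)
    (fstar : EuclideanSpace ℝ (Fin d) → ℝ)
    (hfstar : ∀ s, IsLeast (Set.range (fun z => F z + lam / 2 * ‖z - s‖ ^ 2)) (fstar s))
    (x v y g : ℕ → EuclideanSpace ℝ (Fin d))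
    (hv0 : v 0 = x 0)
    (hy : ∀ t, y t = (1 / (1 + ρ ^ (-(1 / 2) : ℝ))) • x t
        + (ρ ^ (-(1 / 2) : ℝ) / (1 + ρ ^ (-(1 / 2) : ℝ))) • v t)
    (hx : ∀ t, (F (x (t + 1)) + lam / 2 * ‖x (t + 1) - y t‖ ^ 2) - fstar (y t) ≤
        ρ ^ (-(3 / 2) : ℝ) / 8 *
          ((F (x t) + lam / 2 * ‖x t - y t‖ ^ 2) - fstar (y t)))
    (hg : ∀ t, g t = lam • (y t - x (t + 1)))
    (hvs : ∀ t, v (t + 1) = (1 - ρ ^ (-(1 / 2) : ℝ)) • v t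
        + ρ ^ (-(1 / 2) : ℝ) • (y t - (1 / μ' + 1 / lam) • g t))
    (T : ℕ) (hT : (T : ℝ) ≥ 2 * Real.sqrt ρ * Real.log (c * (lam + 2 * μ') / μ')) :
    F (x T) - Fstar ≤ 1 / c * (F (x 0) - Fstar) := by
  obtain rfl : μ = 2 * μ' := by linarith
  have hμ'0 : 0 < μ' := by linarith
  have hlam0 : 0 < lam := by linarith
  have hρ0 : 0 < ρ := by rw [hρ]; exact div_pos (by linarith) hμ'0
  set τ := ρ ^ (-(1 / 2) : ℝ) with hτ_def
  have hτ : τ = (√ρ)⁻¹ := by rw [Real.sqrt_eq_rpow, ← Real.rpow_neg hρ0.le]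
  have hτ0 : 0 < τ := by rw [hτ]; positivity
  have hτ2 : τ ^ 2 * (μ' + lam) = μ' := by
    rw [hτ, inv_pow, Real.sq_sqrt hρ0.le, hρ]; field_simp
  have hτ1 := le_half_of_sq_mul_eq hμ'0 hlam hτ0 hτ2
  have hτ3 : ρ ^ (-(3 / 2) : ℝ) = τ ^ 3 := by
    rw [hτ_def, ← Real.rpow_natCast, ← Real.rpow_mul hρ0.le]; norm_num
  obtain ⟨xstar, rfl⟩ := hF.1
  have hxstar : IsMinOn F univ xstar := isMinOn_univ_iff.2 fun z => hF.2 ⟨z, rfl⟩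
  have hF' : StrongConvexOn univ (2 * μ') F := strongConvexOn_iff_convex.2 hsc
  let Φ (t : ℕ) : ℝ := appaPotential F (lam * τ ^ 2) xstar (x t) (v t)
  have hstep (t : ℕ) : Φ (t + 1) ≤ (1 - τ / 2) * Φ t := by
    rw [hτ3] at hx
    exact appaPotential_succ_le hF' hxstar hfstar hμ'0 hlam hτ0 hτ2 (hy t) (hx t) (hg t) (hvs t)
  have hΦ0 : Φ 0 ≤ 3 / 2 * (F (x 0) - F xstar) := by
    simp only [Φ, hv0]
    exact appaPotential_self_le hF' hxstar (by nlinarith [mul_pos hlam0 hμ'0])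
  have hrate : (1 - τ / 2) ^ T ≤ (c * (lam + 2 * μ') / μ')⁻¹ := by
    refine one_sub_pow_le_inv_of_log_le (by linarith) (by positivity) ?_
    have hτρ : τ * √ρ = 1 := by rw [hτ]; field_simp
    linear_combination mul_le_mul_of_nonneg_left hT (by positivity : 0 ≤ τ / 2)
      - Real.log (c * (lam + 2 * μ') / μ') * hτρ
  calc F (x T) - F xstar ≤ Φ T := sub_le_appaPotential (by positivity)
    _ ≤ (1 - τ / 2) ^ T * Φ 0 := le_geom (by linarith) T fun k _ => hstep k
    _ ≤ (c * (lam + 2 * μ') / μ')⁻¹ * (3 / 2 * (F (x 0) - F xstar)) :=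
        mul_le_mul hrate hΦ0 (appaPotential_nonneg hxstar (by positivity)) (by positivity)
    _ ≤ 1 / c * (F (x 0) - F xstar) := by
      rw [← mul_assoc]
      gcongr
      · exact sub_nonneg.2 (isMinOn_univ_iff.1 hxstar _)
      rw [inv_div, div_mul_eq_mul_div, div_le_div_iff₀ (by positivity) (by positivity)]
      nlinarith
end

section
/- In the ERM setting with each φ_i differentiable, convex, and L-smooth (L > 0) and ‖a_i‖₂ ≤ R for all i, let s ∈ ℝ^d, λ > 0, and suppose f_{s,λ} attains minimum value f*_{s,λ} and g_{s,λ} attains minimum value g*_{s,λ}. Then for all y ∈ ℝ^n: f_{s,λ}(x̂_{s,λ}(y)) − f*_{s,λ} ≤ 2·(n·κ_λ)²·(g_{s,λ}(y) − g*_{s,λ}), where x̂_{s,λ}(y) := s − (1/λ)Aᵀy and κ_λ := ⌈L·R²/λ⌉. -/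
open scoped RealInnerProductSpace NNReal
open Finset

/-!
Let `x₀` be the primal minimiser and `ŷ i := φᵢ'(⟪aᵢ, x₀⟫)`. Stationarity of the primal objective at
`x₀` says exactly `x₀ = x̂(ŷ)`. Since `φᵢ` is `L`-smooth, its conjugate grows at least like
`(w - ŷᵢ)² / (2L)` away from `ŷᵢ`, with slope `⟪aᵢ, x₀⟫`; the quadratic part of `g` is convex with
gradient `-A x̂(ŷ)` at `ŷ`, so the linear terms cancel and `‖y - ŷ‖² ≤ 2L (g(y) - g(ŷ))`. On the
primal side, smoothness around the stationary point gives
`f(x) - f(x₀) ≤ (L‖A‖_F² + λ)/2 · ‖x - x₀‖²`, and `‖x̂(y) - x̂(ŷ)‖ ≤ ‖A‖_F ‖y - ŷ‖ / λ`. Chaining,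
the primal gap is at most `(q² + q)(g(y) - g(ŷ))` with `q = L‖A‖_F²/λ ≤ n κ_λ`.
-/

theorem apply_le_add_deriv_mul_add_sq {φ : ℝ → ℝ} {K : ℝ≥0} (hφ : Differentiable ℝ φ)
    (hφ' : LipschitzWith K (deriv φ)) (a b : ℝ) :
    φ b ≤ φ a + deriv φ a * (b - a) + K / 2 * (b - a) ^ 2 := by
  set d := b - a
  set g : ℝ → ℝ := fun t => φ (a + t * d) - t * (deriv φ a * d) - K / 2 * d ^ 2 * t ^ 2
  have hg : ∀ t, HasDerivAt g ((deriv φ (a + t * d) - deriv φ a) * d - K * t * d ^ 2) t := by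
    intro t
    have hline : HasDerivAt (fun t : ℝ => a + t * d) d t := by
      simpa using ((hasDerivAt_id t).mul_const d).const_add a
    refine ((((hφ _).hasDerivAt.comp t hline).sub ((hasDerivAt_id t).mul_const _)).sub
      ((hasDerivAt_pow 2 t).const_mul (K / 2 * d ^ 2))).congr_deriv ?_
    simp only [Nat.cast_ofNat]
    ring
  have hanti : AntitoneOn g (Set.Icc 0 1) := by
    refine antitoneOn_of_deriv_nonpos (convex_Icc 0 1)
      (fun t _ => (hg t).continuousAt.continuousWithinAt)
      (fun t _ => (hg t).differentiableAt.differentiableWithinAt) fun t ht => ?_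
    rw [interior_Icc] at ht
    have hlip : |deriv φ (a + t * d) - deriv φ a| ≤ K * (t * |d|) := by
      simpa [Real.dist_eq, abs_mul, abs_of_pos ht.1] using hφ'.dist_le_mul (a + t * d) a
    calc deriv g t = (deriv φ (a + t * d) - deriv φ a) * d - K * t * d ^ 2 := (hg t).deriv
      _ ≤ |deriv φ (a + t * d) - deriv φ a| * |d| - K * t * d ^ 2 := by
          have := le_abs_self ((deriv φ (a + t * d) - deriv φ a) * d)
          rw [abs_mul] at this
          linarith
      _ ≤ K * (t * |d|) * |d| - K * t * d ^ 2 := by gcongr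
      _ = 0 := by rw [← sq_abs d]; ring
  have := hanti (Set.left_mem_Icc.2 zero_le_one) (Set.right_mem_Icc.2 zero_le_one) zero_le_one
  simp only [g, d, zero_mul, add_zero, one_mul, one_pow, mul_one, zero_pow two_ne_zero, mul_zero,
    sub_zero, add_sub_cancel] at this
  linarith

theorem ConvexOn.apply_add_deriv_mul_sub_le {φ : ℝ → ℝ} (hφ : ConvexOn ℝ Set.univ φ) {a : ℝ}
    (ha : DifferentiableAt ℝ φ a) (b : ℝ) : φ a + deriv φ a * (b - a) ≤ φ b := by
  rcases lt_trichotomy a b with hab | rfl | hab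
  · have := hφ.deriv_le_slope (Set.mem_univ a) (Set.mem_univ b) hab ha
    rw [slope_def_field, le_div_iff₀ (sub_pos.2 hab)] at this
    linarith
  · simp
  · have := hφ.slope_le_deriv (Set.mem_univ b) (Set.mem_univ a) hab ha
    rw [slope_def_field, div_le_iff₀ (sub_pos.2 hab)] at this
    linarith

def IsFenchelConjugate (φ ψ : ℝ → ℝ) : Prop :=
  ∀ w, IsLUB {u : ℝ | ∃ z : ℝ, u = w * z - φ z} (ψ w)

namespace IsFenchelConjugate

variable {φ ψ : ℝ → ℝ}

theorem mul_sub_le (h : IsFenchelConjugate φ ψ) (w z : ℝ) : w * z - φ z ≤ ψ w :=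
  (h w).1 ⟨z, rfl⟩

theorem apply_deriv (h : IsFenchelConjugate φ ψ) (hφ : ConvexOn ℝ Set.univ φ) {z : ℝ}
    (hz : DifferentiableAt ℝ φ z) : ψ (deriv φ z) = deriv φ z * z - φ z := by
  refine le_antisymm ((h _).2 ?_) (h.mul_sub_le _ z)
  rintro u ⟨z', rfl⟩
  have := hφ.apply_add_deriv_mul_sub_le hz z'
  linarith

theorem add_sq_div_le (h : IsFenchelConjugate φ ψ) (hφ : ConvexOn ℝ Set.univ φ)
    (hφd : Differentiable ℝ φ) {K : ℝ≥0} (hφ' : LipschitzWith K (deriv φ)) (hK : 0 < K)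
    (z w : ℝ) :
    ψ (deriv φ z) + z * (w - deriv φ z) + (w - deriv φ z) ^ 2 / (2 * K) ≤ ψ w := by
  set y := deriv φ z
  -- Test the supremum defining `ψ w` at `z + δ`.
  set δ := (w - y) / K with hδ_def
  have hδ : (w - y) * δ - K / 2 * δ ^ 2 = (w - y) ^ 2 / (2 * K) := by
    have : (K : ℝ) ≠ 0 := by positivity
    rw [hδ_def]
    field_simp
    ring
  have hsmooth := apply_le_add_deriv_mul_add_sq hφd hφ' z (z + δ)
  have hval := h.apply_deriv hφ (hφd z)
  have hFY := h.mul_sub_le w (z + δ)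
  simp only [add_sub_cancel_left] at hsmooth
  nlinarith

end IsFenchelConjugate

section ERM

variable {ι E : Type*} [Fintype ι] [NormedAddCommGroup E] [InnerProductSpace ℝ E]

-- `f_{s,λ}`, `g_{s,λ}` and `x̂_{s,λ}`, with `Aᵀ y = ∑ i, y i • a i`.
noncomputable def primalObj (φ : ι → ℝ → ℝ) (a : ι → E) (s : E) (lam : ℝ) (x : E) : ℝ :=
  (∑ i, φ i ⟪a i, x⟫) + lam / 2 * ‖x - s‖ ^ 2

noncomputable def dualObj (ψ : ι → ℝ → ℝ) (a : ι → E) (s : E) (lam : ℝ) (y : ι → ℝ) : ℝ :=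
  (∑ i, ψ i (y i)) + 1 / (2 * lam) * ‖∑ i, y i • a i‖ ^ 2 - ⟪s, ∑ i, y i • a i⟫

noncomputable def primalOfDual (a : ι → E) (s : E) (lam : ℝ) (y : ι → ℝ) : E :=
  s - lam⁻¹ • ∑ i, y i • a i

theorem norm_sum_smul_sq_le (c : ι → ℝ) (a : ι → E) :
    ‖∑ i, c i • a i‖ ^ 2 ≤ (∑ i, ‖a i‖ ^ 2) * ∑ i, c i ^ 2 := by
  have htri : ‖∑ i, c i • a i‖ ≤ ∑ i, ‖a i‖ * |c i| :=
    (norm_sum_le _ _).trans_eq (by simp [norm_smul, mul_comm])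
  calc ‖∑ i, c i • a i‖ ^ 2 ≤ (∑ i, ‖a i‖ * |c i|) ^ 2 := by gcongr
    _ ≤ (∑ i, ‖a i‖ ^ 2) * ∑ i, |c i| ^ 2 := sum_mul_sq_le_sq_mul_sq _ _ _
    _ = (∑ i, ‖a i‖ ^ 2) * ∑ i, c i ^ 2 := by simp only [sq_abs]

theorem norm_primalOfDual_sub_sq_le (a : ι → E) (s : E) (lam : ℝ) (y y' : ι → ℝ) :
    ‖primalOfDual a s lam y - primalOfDual a s lam y'‖ ^ 2 ≤
      lam⁻¹ ^ 2 * ((∑ i, ‖a i‖ ^ 2) * ∑ i, (y i - y' i) ^ 2) := by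
  have hdiff : primalOfDual a s lam y - primalOfDual a s lam y' =
      -lam⁻¹ • ∑ i, (y i - y' i) • a i := by
    simp only [primalOfDual, sub_smul, sum_sub_distrib, smul_sub, neg_smul]
    abel
  rw [hdiff, norm_smul, mul_pow, Real.norm_eq_abs, sq_abs, neg_sq]
  gcongr
  exact norm_sum_smul_sq_le _ _

variable {φ : ι → ℝ → ℝ} {a : ι → E} {s : E} {lam : ℝ} {K : ℝ≥0} {ŷ : ι → ℝ}

theorem primalOfDual_deriv_eq_of_isLocalMin {x₀ : E} (hlam : lam ≠ 0)
    (hφ : ∀ i, DifferentiableAt ℝ (φ i) ⟪a i, x₀⟫)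
    (hmin : IsLocalMin (primalObj φ a s lam) x₀) :
    primalOfDual a s lam (fun i => deriv (φ i) ⟪a i, x₀⟫) = x₀ := by
  -- `v` is the gradient of the primal objective at `x₀`.
  obtain ⟨v, hv⟩ : ∃ v, v = ∑ i, deriv (φ i) ⟪a i, x₀⟫ • a i + lam • (x₀ - s) := ⟨_, rfl⟩
  have hderiv : HasFDerivAt (primalObj φ a s lam)
      (∑ i, deriv (φ i) ⟪a i, x₀⟫ • innerSL ℝ (a i) + (lam / 2) • (2 • innerSL ℝ (x₀ - s))) x₀ :=
    (HasFDerivAt.fun_sum fun i _ =>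
      (hφ i).hasDerivAt.comp_hasFDerivAt x₀ (innerSL ℝ (a i)).hasFDerivAt).add
      (((hasFDerivAt_id x₀).sub_const s).norm_sq.const_mul (lam / 2))
  have hv0 : v = 0 := by
    have hdir := congrArg (fun f => f v) (hmin.hasFDerivAt_eq_zero hderiv)
    simp only [map_sub, add_apply, _root_.sum_apply, smul_apply, coe_innerSL_apply, smul_eq_mul,
      sub_apply, nsmul_eq_mul, Nat.cast_ofNat, zero_apply] at hdir
    rw [← inner_self_eq_zero (𝕜 := ℝ)]
    nth_rw 1 [hv]
    simp only [inner_add_left, sum_inner, real_inner_smul_left, inner_sub_left]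
    linarith
  have hx₀ : x₀ = lam⁻¹ • -∑ i, deriv (φ i) ⟪a i, x₀⟫ • a i + s := by
    rw [← sub_eq_iff_eq_add, eq_inv_smul_iff₀ hlam]
    exact eq_neg_of_add_eq_zero_right (hv ▸ hv0)
  rw [primalOfDual]
  conv_rhs => rw [hx₀, smul_neg]
  abel

theorem primalObj_le_add_sq (hφd : ∀ i, Differentiable ℝ (φ i))
    (hφ' : ∀ i, LipschitzWith K (deriv (φ i))) (hlam : lam ≠ 0)
    (hŷ : ∀ i, ŷ i = deriv (φ i) ⟪a i, primalOfDual a s lam ŷ⟫) (x : E) :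
    primalObj φ a s lam x ≤ primalObj φ a s lam (primalOfDual a s lam ŷ) +
      (K * ∑ i, ‖a i‖ ^ 2 + lam) / 2 * ‖x - primalOfDual a s lam ŷ‖ ^ 2 := by
  set x₀ := primalOfDual a s lam ŷ
  have hterm : ∀ i, φ i ⟪a i, x⟫ ≤
      φ i ⟪a i, x₀⟫ + ŷ i * ⟪a i, x - x₀⟫ + K / 2 * (‖a i‖ ^ 2 * ‖x - x₀‖ ^ 2) := by
    intro i
    have hsmooth := apply_le_add_deriv_mul_add_sq (hφd i) (hφ' i) ⟪a i, x₀⟫ ⟪a i, x⟫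
    have hcs : ⟪a i, x - x₀⟫ ^ 2 ≤ ‖a i‖ ^ 2 * ‖x - x₀‖ ^ 2 := by
      rw [← mul_pow, ← sq_abs]
      gcongr
      exact abs_real_inner_le_norm _ _
    rw [← inner_sub_right, ← hŷ i] at hsmooth
    have hK : (0 : ℝ) ≤ K / 2 := by positivity
    nlinarith
  have hlin : ∑ i, ŷ i * ⟪a i, x - x₀⟫ + lam * ⟪x₀ - s, x - x₀⟫ = 0 := by
    have hx₀ : x₀ - s = -lam⁻¹ • ∑ i, ŷ i • a i := by simp [x₀, primalOfDual]
    rw [hx₀, real_inner_smul_left, sum_inner]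
    simp only [real_inner_smul_left]
    field_simp
    ring
  have hsum := sum_le_sum fun i (_ : i ∈ univ) => hterm i
  simp only [sum_add_distrib, ← sum_mul, ← mul_sum] at hsum
  have hquad : ‖x - s‖ ^ 2 = ‖x₀ - s‖ ^ 2 + 2 * ⟪x₀ - s, x - x₀⟫ + ‖x - x₀‖ ^ 2 := by
    rw [← norm_add_sq_real, sub_add_sub_cancel']
  simp only [primalObj]
  rw [hquad]
  linear_combination hsum + hlin

theorem sum_sq_div_le_dualObj_sub {ψ : ι → ℝ → ℝ} (hψ : ∀ i, IsFenchelConjugate (φ i) (ψ i))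
    (hφ : ∀ i, ConvexOn ℝ Set.univ (φ i)) (hφd : ∀ i, Differentiable ℝ (φ i))
    (hφ' : ∀ i, LipschitzWith K (deriv (φ i))) (hK : 0 < K) (hlam : 0 < lam)
    (hŷ : ∀ i, ŷ i = deriv (φ i) ⟪a i, primalOfDual a s lam ŷ⟫) (y : ι → ℝ) :
    (∑ i, (y i - ŷ i) ^ 2) / (2 * K) ≤ dualObj ψ a s lam y - dualObj ψ a s lam ŷ := by
  set x₀ := primalOfDual a s lam ŷ
  set u := ∑ i, ŷ i • a i
  set v := ∑ i, y i • a i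
  have hterm : ∀ i,
      ψ i (ŷ i) + ⟪a i, x₀⟫ * (y i - ŷ i) + (y i - ŷ i) ^ 2 / (2 * K) ≤ ψ i (y i) := by
    intro i
    have := (hψ i).add_sq_div_le (hφ i) (hφd i) (hφ' i) hK ⟪a i, x₀⟫ (y i)
    rwa [← hŷ i] at this
  have hsum := sum_le_sum fun i (_ : i ∈ univ) => hterm i
  simp only [sum_add_distrib, ← sum_div] at hsum
  have hlin : ∑ i, ⟪a i, x₀⟫ * (y i - ŷ i) = ⟪v - u, x₀⟫ := by
    simp only [v, u, ← sum_sub_distrib, ← sub_smul, sum_inner, real_inner_smul_left, mul_comm]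
  have hquad :
      1 / (2 * lam) * ‖u‖ ^ 2 - ⟪s, u⟫ - ⟪v - u, x₀⟫ ≤ 1 / (2 * lam) * ‖v‖ ^ 2 - ⟪s, v⟫ := by
    have hv : ‖v‖ ^ 2 = ‖u‖ ^ 2 + 2 * ⟪u, v - u⟫ + ‖v - u‖ ^ 2 := by
      rw [← norm_add_sq_real, add_sub_cancel]
    have hx₀ : ⟪v - u, x₀⟫ = ⟪s, v⟫ - ⟪s, u⟫ - lam⁻¹ * ⟪u, v - u⟫ := by
      rw [show x₀ = s - lam⁻¹ • u from rfl, inner_sub_right, real_inner_smul_right, inner_sub_left,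
        inner_sub_left, inner_sub_right, real_inner_comm s v, real_inner_comm s u,
        real_inner_comm u v]
    have hnonneg : 0 ≤ 1 / (2 * lam) * ‖v - u‖ ^ 2 := by positivity
    have hgap : 1 / (2 * lam) * ‖v‖ ^ 2 - ⟪s, v⟫ - (1 / (2 * lam) * ‖u‖ ^ 2 - ⟪s, u⟫ - ⟪v - u, x₀⟫)
        = 1 / (2 * lam) * ‖v - u‖ ^ 2 := by
      rw [hv, hx₀]
      field_simp
      ring
    linarith
  simp only [dualObj]
  linarith

theorem primalObj_sub_le_dualObj_sub {ψ : ι → ℝ → ℝ} (hψ : ∀ i, IsFenchelConjugate (φ i) (ψ i))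
    (hφ : ∀ i, ConvexOn ℝ Set.univ (φ i)) (hφd : ∀ i, Differentiable ℝ (φ i))
    (hφ' : ∀ i, LipschitzWith K (deriv (φ i))) (hK : 0 < K) (hlam : 0 < lam)
    (hŷ : ∀ i, ŷ i = deriv (φ i) ⟪a i, primalOfDual a s lam ŷ⟫) (y : ι → ℝ) :
    primalObj φ a s lam (primalOfDual a s lam y) - primalObj φ a s lam (primalOfDual a s lam ŷ) ≤
      (((K * ∑ i, ‖a i‖ ^ 2) / lam) ^ 2 + (K * ∑ i, ‖a i‖ ^ 2) / lam) *
        (dualObj ψ a s lam y - dualObj ψ a s lam ŷ) := by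
  set S := ∑ i, ‖a i‖ ^ 2
  have hprimal := primalObj_le_add_sq hφd hφ' hlam.ne' hŷ (primalOfDual a s lam y)
  have hdist := norm_primalOfDual_sub_sq_le a s lam y ŷ
  have hdual := sum_sq_div_le_dualObj_sub hψ hφ hφd hφ' hK hlam hŷ y
  have hK' : (K : ℝ) ≠ 0 := by positivity
  calc _ ≤ (K * S + lam) / 2 * ‖primalOfDual a s lam y - primalOfDual a s lam ŷ‖ ^ 2 := by
        linarith
    _ ≤ (K * S + lam) / 2 * (lam⁻¹ ^ 2 * (S * ∑ i, (y i - ŷ i) ^ 2)) := by gcongr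
    _ = ((K * S / lam) ^ 2 + K * S / lam) * ((∑ i, (y i - ŷ i) ^ 2) / (2 * K)) := by
        field_simp
    _ ≤ _ := by gcongr

end ERM

theorem sq_add_le_two_mul_natCast_sq {q : ℝ} {m : ℕ} (hq₀ : 0 ≤ q) (hq : q ≤ m) :
    q ^ 2 + q ≤ 2 * (m : ℝ) ^ 2 := by
  rcases m.eq_zero_or_pos with rfl | hm
  · obtain rfl : q = 0 := le_antisymm (by simpa using hq) hq₀
    simp
  · have : (1 : ℝ) ≤ m := by exact_mod_cast hm
    nlinarith

theorem sq_add_le_two_mul_card_mul_ceil_sq {E : Type*} [NormedAddCommGroup E] {n : ℕ}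
    {a : Fin n → E} {L R lam : ℝ} (hL : 0 ≤ L) (hlam : 0 < lam) (hR : ∀ i, ‖a i‖ ≤ R) :
    ((L * ∑ i, ‖a i‖ ^ 2) / lam) ^ 2 + (L * ∑ i, ‖a i‖ ^ 2) / lam ≤
      2 * ((n : ℝ) * (⌈L * R ^ 2 / lam⌉₊ : ℝ)) ^ 2 := by
  have hS : ∑ i, ‖a i‖ ^ 2 ≤ n * R ^ 2 := by
    simpa using sum_le_card_nsmul univ _ (R ^ 2) fun i _ =>
      pow_le_pow_left₀ (norm_nonneg _) (hR i) 2
  have hq : L * (∑ i, ‖a i‖ ^ 2) / lam ≤ (n * ⌈L * R ^ 2 / lam⌉₊ : ℕ) := by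
    push_cast
    calc L * (∑ i, ‖a i‖ ^ 2) / lam ≤ L * (n * R ^ 2) / lam := by gcongr
      _ = n * (L * R ^ 2 / lam) := by ring
      _ ≤ n * ⌈L * R ^ 2 / lam⌉₊ := by gcongr; exact Nat.le_ceil _
  simpa using sq_add_le_two_mul_natCast_sq (by positivity) hq

/-- Lemma: dual error bounds primal error. -/
theorem stmt12 {n d : ℕ} (a : Fin n → EuclideanSpace ℝ (Fin d))
    (φ : Fin n → ℝ → ℝ) (hconv : ∀ i, ConvexOn ℝ Set.univ (φ i))
    (L : ℝ) (hL : 0 < L)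
    (hdiff : ∀ i, Differentiable ℝ (φ i))
    (hlip : ∀ i, LipschitzWith L.toNNReal (deriv (φ i)))
    (R : ℝ) (hR : ∀ i, ‖a i‖ ≤ R)
    (φstar : Fin n → ℝ → ℝ)
    (hφstar : ∀ i (w : ℝ), IsLUB {u : ℝ | ∃ z : ℝ, u = w * z - φ i z} (φstar i w))
    (s : EuclideanSpace ℝ (Fin d)) (lam : ℝ) (hlam : 0 < lam)
    (fstar : ℝ)
    (hfstar : IsLeast
      (Set.range (fun x : EuclideanSpace ℝ (Fin d) =>
        (∑ i, φ i ⟪a i, x⟫) + lam / 2 * ‖x - s‖ ^ 2)) fstar)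
    (gstar : ℝ)
    (hgstar : IsLeast
      (Set.range (fun y : EuclideanSpace ℝ (Fin n) =>
        (∑ i, φstar i (y i)) + 1 / (2 * lam) * ‖∑ i, y i • a i‖ ^ 2
          - ⟪s, ∑ i, y i • a i⟫)) gstar) :
    ∀ y : EuclideanSpace ℝ (Fin n),
      ((∑ i, φ i ⟪a i, s - lam⁻¹ • ∑ j, y j • a j⟫)
          + lam / 2 * ‖(s - lam⁻¹ • ∑ j, y j • a j) - s‖ ^ 2) - fstar ≤
        2 * ((n : ℝ) * (⌈L * R ^ 2 / lam⌉₊ : ℝ)) ^ 2 *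
          (((∑ i, φstar i (y i)) + 1 / (2 * lam) * ‖∑ i, y i • a i‖ ^ 2
            - ⟪s, ∑ i, y i • a i⟫) - gstar) := by
  intro y
  obtain ⟨x₀, hx₀ : primalObj φ a s lam x₀ = fstar⟩ := hfstar.1
  have hmin : IsLocalMin (primalObj φ a s lam) x₀ :=
    IsMinOn.isLocalMin (fun x _ => hx₀.trans_le (hfstar.2 ⟨x, rfl⟩)) Filter.univ_mem
  set ŷ := fun i => deriv (φ i) ⟪a i, x₀⟫
  have hx₀ŷ : primalOfDual a s lam ŷ = x₀ :=
    primalOfDual_deriv_eq_of_isLocalMin hlam.ne' (fun i => hdiff i _) hmin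
  have hŷ : ∀ i, ŷ i = deriv (φ i) ⟪a i, primalOfDual a s lam ŷ⟫ := by
    rw [hx₀ŷ]; exact fun _ => rfl
  have hgap := primalObj_sub_le_dualObj_sub hφstar hconv hdiff hlip (Real.toNNReal_pos.2 hL) hlam
    hŷ y.ofLp
  rw [hx₀ŷ, hx₀, Real.coe_toNNReal L hL.le] at hgap
  have hgŷ : gstar ≤ dualObj φstar a s lam ŷ := hgstar.2 ⟨WithLp.toLp 2 ŷ, rfl⟩
  have hgy : gstar ≤ dualObj φstar a s lam y.ofLp := hgstar.2 ⟨y, rfl⟩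
  have hconst := sq_add_le_two_mul_card_mul_ceil_sq (a := a) hL.le hlam hR
  change primalObj φ a s lam (primalOfDual a s lam y.ofLp) - fstar ≤
    _ * (dualObj φstar a s lam y.ofLp - gstar)
  calc _ ≤ _ := hgap
    _ ≤ (((L * ∑ i, ‖a i‖ ^ 2) / lam) ^ 2 + (L * ∑ i, ‖a i‖ ^ 2) / lam) *
        (dualObj φstar a s lam y.ofLp - gstar) := by gcongr
    _ ≤ _ := by gcongr
end
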